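/- arXiv:2404.11028 — 4 statements merged into one kernel-verified Lean document; each statement's English description precedes it below -/
import Mathlib

section
/- Let m ≥ 5. Every triangulation T'' of the m-gon arises, up to a rotation of the vertex labels, from the subdivision construction: there exist c ∈ ZMod m and a triangulation T of the (m−1)-gon such that T'' = { {a + c, b + c} : {a, b} ∈ T ∪ {{m−2, 0}} }, where T ∪ {{m−2, 0}} is the subdivision of T at the boundary edge {m−2, 0} of the (m−1)-gon. -/
open scoped Classical

/-- The cyclic distance between two vertices of the `n`-gon labeled by `ZMod n`:
`min (k, n - k)` where `k` is the representative of `b - a`. -/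
def cycDist {n : ℕ} (a b : ZMod n) : ℕ := min (b - a).val (a - b).val

/-- The length of an unordered pair of vertices (in particular, of a chord). -/
def chordLen {n : ℕ} (p : Sym2 (ZMod n)) : ℕ :=
  Sym2.lift ⟨fun a b => cycDist a b, fun _ _ => min_comm _ _⟩ p

/-- `x` lies strictly inside the clockwise arc from `a` to `b`. -/
def InArc {n : ℕ} (a b x : ZMod n) : Prop :=
  0 < (x - a).val ∧ (x - a).val < (b - a).val

/-- Two chords cross: their four endpoints are distinct and exactly one endpoint of the
second chord lies strictly inside the clockwise arc from `a` to `b`. -/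
def Crosses {n : ℕ} (p q : Sym2 (ZMod n)) : Prop :=
  ∃ a b c d : ZMod n, p = s(a, b) ∧ q = s(c, d) ∧
    a ≠ b ∧ a ≠ c ∧ a ≠ d ∧ b ≠ c ∧ b ≠ d ∧ c ≠ d ∧
    Xor' (InArc a b c) (InArc a b d)

/-- A triangulation of the `n`-gon: a set of `n - 3` pairwise non-crossing chords
(each chord having length at least 2). -/
def IsTriangulation (n : ℕ) (T : Finset (Sym2 (ZMod n))) : Prop :=
  T.card = n - 3 ∧ (∀ p ∈ T, 2 ≤ chordLen p) ∧
    ∀ p ∈ T, ∀ q ∈ T, p ≠ q → ¬ Crosses p q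

/-- The total chord length of a triangulation. -/
def TCL (n : ℕ) (T : Finset (Sym2 (ZMod n))) : ℕ := ∑ p ∈ T, chordLen p

/-- A diameter is a chord of length `n / 2` (only possible for `n` even). -/
def IsDiameter {n : ℕ} (p : Sym2 (ZMod n)) : Prop := 2 * chordLen p = n

/-- The chord `p` layers the boundary edge `{i, i + 1}`: the edge lies on the (strictly)
shorter of the two arcs between the endpoints of `p`.  (Diameters never layer an edge.) -/
def LayersEdge {n : ℕ} (p : Sym2 (ZMod n)) (i : ZMod n) : Prop :=
  ∃ a b : ZMod n, p = s(a, b) ∧ (b - a).val < (a - b).val ∧ (i - a).val < (b - a).val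

/-- The doubled layer number of the boundary edge `{i, i + 1}`:
twice the number of non-diameter chords layering it, plus the number of diameters. -/
noncomputable def mT (n : ℕ) (T : Finset (Sym2 (ZMod n))) (i : ZMod n) : ℕ :=
  2 * (T.filter (fun p => LayersEdge p i ∧ ¬ IsDiameter p)).card +
    (T.filter (fun p => IsDiameter p)).card

/-- Subdivision of a triangulation of the `n`-gon at the boundary edge `{n-1, 0}`:
re-embed all chords (via representatives in `{0, …, n-1}`) into the `(n+1)`-gon, whose new
vertex `n` lies between `n - 1` and `0`, and add the chord `{n - 1, 0}`. -/
def subdiv (n : ℕ) (T : Finset (Sym2 (ZMod n))) : Finset (Sym2 (ZMod (n + 1))) :=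
  T.image (Sym2.map (fun a : ZMod n => ((a.val : ℕ) : ZMod (n + 1)))) ∪
    {s(((n - 1 : ℕ) : ZMod (n + 1)), (0 : ZMod (n + 1)))}

/-- Doubling construction: subdivide every boundary edge of the `m`-gon (old vertex `a`
becomes `2a` in the `2m`-gon) and add the chord `{2a, 2a+2}` over each new vertex. -/
def doubleTri (m : ℕ) (T : Finset (Sym2 (ZMod m))) : Finset (Sym2 (ZMod (2 * m))) :=
  T.image (Sym2.map (fun a : ZMod m => ((2 * a.val : ℕ) : ZMod (2 * m)))) ∪
    (Finset.range m).image
      (fun a : ℕ => s(((2 * a : ℕ) : ZMod (2 * m)), ((2 * a + 2 : ℕ) : ZMod (2 * m))))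

set_option linter.unusedSectionVars false
set_option maxHeartbeats 1000000

section Basics
variable {m : ℕ} [NeZero m]

lemma sub_val_le {x y : ZMod m} (h : x.val ≤ y.val) : (y - x).val = y.val - x.val :=
  ZMod.val_sub h

lemma sub_val_gt {x y : ZMod m} (h : y.val < x.val) : (y - x).val = m + y.val - x.val := by
  have hxy : (x - y).val = x.val - y.val := ZMod.val_sub h.le
  have hne : x - y ≠ 0 := by
    intro h0
    have : (x - y).val = 0 := by rw [h0]; exact ZMod.val_zero
    omega
  have : NeZero (x - y) := ⟨hne⟩
  have h2 : (-(x - y)).val = m - (x - y).val := ZMod.val_neg_of_ne_zero _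
  have h3 : y - x = -(x - y) := by ring
  have hx := ZMod.val_lt x
  rw [h3, h2, hxy]; omega

lemma sub_val_pos {x y : ZMod m} (h : x ≠ y) : 0 < (y - x).val := by
  have : y - x ≠ 0 := sub_ne_zero.mpr (Ne.symm h)
  exact ZMod.val_pos.mpr this

lemma sub_val_add_sub_val {x y : ZMod m} (h : x ≠ y) : (y - x).val + (x - y).val = m := by
  rcases le_or_gt x.val y.val with hle | hlt
  · have hxy : x.val ≠ y.val := fun he => h (ZMod.val_injective _ he)
    have h1 := sub_val_le hle
    have h2 := sub_val_gt (lt_of_le_of_ne hle hxy)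
    have := ZMod.val_lt y
    omega
  · have h1 := sub_val_gt hlt
    have h2 := sub_val_le hlt.le
    have := ZMod.val_lt x
    omega

omit [NeZero m] in
lemma chordLen_mk (a b : ZMod m) : chordLen s(a, b) = min (b - a).val (a - b).val := rfl

lemma val_inj' {x y : ZMod m} : x = y ↔ x.val = y.val :=
  ⟨fun h => h ▸ rfl, fun h => ZMod.val_injective _ h⟩

end Basics

lemma sym2_rep {α : Type*} (p : Sym2 α) : ∃ a b, p = s(a, b) := by
  induction p using Sym2.ind with | _ x y => exact ⟨x, y, rfl⟩

lemma sym2_swap_mem {α : Type*} {S : Finset (Sym2 α)} {u v : α} (h : s(u, v) ∈ S) :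
    s(v, u) ∈ S := by rwa [Sym2.eq_swap]

lemma rep_val_ge {m : ℕ} {S : Finset (Sym2 (ZMod m))}
    (hlen : ∀ p ∈ S, 2 ≤ chordLen p) {u v : ZMod m} (h : s(u, v) ∈ S) :
    2 ≤ (v - u).val := by
  have := hlen _ h
  rw [chordLen_mk, le_min_iff] at this
  exact this.1

section Rot
variable {m : ℕ}

lemma rot_sub (x y c : ZMod m) : (y + c) - (x + c) = y - x := by ring

lemma inArc_rot (a b x c : ZMod m) : InArc (a + c) (b + c) (x + c) ↔ InArc a b x := by
  unfold InArc; rw [rot_sub, rot_sub]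

lemma chordLen_rot (c : ZMod m) (p : Sym2 (ZMod m)) :
    chordLen (Sym2.map (fun x => x + c) p) = chordLen p := by
  induction p using Sym2.ind with
  | _ a b => simp only [Sym2.map_pair_eq, chordLen_mk, rot_sub]

lemma crosses_rot_mp {c : ZMod m} {p q : Sym2 (ZMod m)} (h : Crosses p q) :
    Crosses (Sym2.map (fun x => x + c) p) (Sym2.map (fun x => x + c) q) := by
  obtain ⟨a, b, u, v, hp, hq, h1, h2, h3, h4, h5, h6, hx⟩ := h
  refine ⟨a + c, b + c, u + c, v + c, by rw [hp, Sym2.map_pair_eq],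
    by rw [hq, Sym2.map_pair_eq], ?_, ?_, ?_, ?_, ?_, ?_, ?_⟩
  · simpa using h1
  · simpa using h2
  · simpa using h3
  · simpa using h4
  · simpa using h5
  · simpa using h6
  · rwa [Xor', inArc_rot, inArc_rot, ← Xor']

lemma map_rot_inv (c : ZMod m) (p : Sym2 (ZMod m)) :
    Sym2.map (fun x => x + -c) (Sym2.map (fun x => x + c) p) = p := by
  induction p using Sym2.ind with
  | _ a b => simp [Sym2.map_pair_eq]

lemma crosses_rot (c : ZMod m) (p q : Sym2 (ZMod m)) :
    Crosses (Sym2.map (fun x => x + c) p) (Sym2.map (fun x => x + c) q) ↔ Crosses p q := by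
  constructor
  · intro h
    have h2 := crosses_rot_mp (c := -c) h
    rwa [map_rot_inv, map_rot_inv] at h2
  · exact crosses_rot_mp

lemma map_rot_inj (c : ZMod m) : Function.Injective (Sym2.map (fun x : ZMod m => x + c)) := by
  apply Sym2.map.injective
  intro x y h
  simpa using h

lemma rot_image_len (c : ZMod m) {S : Finset (Sym2 (ZMod m))}
    (hlen : ∀ p ∈ S, 2 ≤ chordLen p) :
    ∀ p ∈ S.image (Sym2.map (fun x => x + c)), 2 ≤ chordLen p := by
  intro p hp
  obtain ⟨q, hq, rfl⟩ := Finset.mem_image.mp hp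
  rw [chordLen_rot]; exact hlen q hq

lemma rot_image_cr (c : ZMod m) {S : Finset (Sym2 (ZMod m))}
    (hcr : ∀ p ∈ S, ∀ q ∈ S, p ≠ q → ¬ Crosses p q) :
    ∀ p ∈ S.image (Sym2.map (fun x => x + c)), ∀ q ∈ S.image (Sym2.map (fun x => x + c)),
      p ≠ q → ¬ Crosses p q := by
  intro p hp q hq hne hcross
  obtain ⟨p₀, hp₀, rfl⟩ := Finset.mem_image.mp hp
  obtain ⟨q₀, hq₀, rfl⟩ := Finset.mem_image.mp hq
  exact hcr p₀ hp₀ q₀ hq₀ (fun hh => hne (by rw [hh])) ((crosses_rot c _ _).mp hcross)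

end Rot

lemma crosses_lift {m m' : ℕ} (G : ZMod m → Prop) (f : ZMod m → ZMod m')
    (hIA : ∀ x y z, G x → G y → G z → (InArc (f x) (f y) (f z) ↔ InArc x y z))
    {a b c d : ZMod m} (hGa : G a) (hGb : G b) (hGc : G c) (hGd : G d)
    (h : Crosses (Sym2.map f s(a, b)) (Sym2.map f s(c, d))) : Crosses s(a, b) s(c, d) := by
  obtain ⟨a', b', c', d', hp', hq', h1, h2, h3, h4, h5, h6, hx⟩ := h
  rw [Sym2.map_pair_eq] at hp' hq'
  rw [Sym2.eq_iff] at hp' hq'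
  have d1 : ∀ x y : ZMod m, f x ≠ f y → x ≠ y := fun x y hf hh => hf (congrArg f hh)
  rcases hp' with ⟨ea, eb⟩ | ⟨ea, eb⟩ <;> rcases hq' with ⟨ec, ed⟩ | ⟨ec, ed⟩ <;>
    subst ea <;> subst eb <;> subst ec <;> subst ed
  · exact ⟨a, b, c, d, rfl, rfl, d1 _ _ h1, d1 _ _ h2, d1 _ _ h3, d1 _ _ h4, d1 _ _ h5, d1 _ _ h6,
      by rw [hIA a b c hGa hGb hGc, hIA a b d hGa hGb hGd] at hx; exact hx⟩
  · exact ⟨a, b, d, c, rfl, Sym2.eq_swap, d1 _ _ h1, d1 _ _ h2, d1 _ _ h3, d1 _ _ h4, d1 _ _ h5,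
      d1 _ _ h6, by rw [hIA a b d hGa hGb hGd, hIA a b c hGa hGb hGc] at hx; exact hx⟩
  · exact ⟨b, a, c, d, Sym2.eq_swap, rfl, d1 _ _ h1, d1 _ _ h2, d1 _ _ h3, d1 _ _ h4, d1 _ _ h5,
      d1 _ _ h6, by rw [hIA b a c hGb hGa hGc, hIA b a d hGb hGa hGd] at hx; exact hx⟩
  · exact ⟨b, a, d, c, Sym2.eq_swap, Sym2.eq_swap, d1 _ _ h1, d1 _ _ h2, d1 _ _ h3, d1 _ _ h4,
      d1 _ _ h5, d1 _ _ h6, by rw [hIA b a d hGb hGa hGd, hIA b a c hGb hGa hGc] at hx; exact hx⟩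

/-! ### Contraction of the top vertex -/

def piC (l : ℕ) : ZMod (l + 1) → ZMod l := fun x => ((x.val : ℕ) : ZMod l)

lemma pi_val {l : ℕ} (hl : 0 < l) {x : ZMod (l + 1)} (hx : x.val < l) :
    (piC l x).val = x.val := by
  haveI : NeZero l := ⟨hl.ne'⟩
  unfold piC
  rw [ZMod.val_natCast]
  exact Nat.mod_eq_of_lt hx

lemma pi_sub_val {l : ℕ} (hl : 0 < l) {x y : ZMod (l + 1)} (hx : x.val < l) (hy : y.val < l) :
    (piC l y - piC l x).val = (if y.val < x.val then l + y.val - x.val else y.val - x.val) ∧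
    (y - x).val = (if y.val < x.val then l + 1 + y.val - x.val else y.val - x.val) := by
  haveI : NeZero l := ⟨hl.ne'⟩
  have hx' : (piC l x).val = x.val := pi_val hl hx
  have hy' : (piC l y).val = y.val := pi_val hl hy
  rcases Nat.lt_or_ge y.val x.val with h | h
  · constructor
    · rw [sub_val_gt (by rw [hx', hy']; exact h), hx', hy', if_pos h]
    · rw [sub_val_gt h, if_pos h]
  · constructor
    · rw [sub_val_le (by rw [hx', hy']; exact h), hx', hy', if_neg (by omega)]
    · rw [sub_val_le h, if_neg (by omega)]

lemma pi_inArc {l : ℕ} (hl : 0 < l) {a b x : ZMod (l + 1)}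
    (ha : a.val < l) (hb : b.val < l) (hx : x.val < l) :
    InArc (piC l a) (piC l b) (piC l x) ↔ InArc a b x := by
  obtain ⟨f1, f2⟩ := pi_sub_val hl ha hx
  obtain ⟨g1, g2⟩ := pi_sub_val hl ha hb
  unfold InArc
  rw [f1, f2, g1, g2]
  split_ifs <;> omega

lemma pi_chordLen {l : ℕ} (hl : 3 ≤ l) {a b : ZMod (l + 1)} (ha : a.val < l) (hb : b.val < l)
    (hlen : 2 ≤ chordLen s(a, b))
    (hne : s(a, b) ≠ s(((l - 1 : ℕ) : ZMod (l + 1)), (0 : ZMod (l + 1)))) :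
    2 ≤ chordLen s(piC l a, piC l b) := by
  have hl0 : 0 < l := by omega
  obtain ⟨f1, f2⟩ := pi_sub_val hl0 ha hb
  obtain ⟨g1, g2⟩ := pi_sub_val hl0 hb ha
  have hx0 : ((l - 1 : ℕ) : ZMod (l + 1)).val = l - 1 := by
    rw [ZMod.val_natCast]; exact Nat.mod_eq_of_lt (by omega)
  have hne1 : ¬ (a.val = l - 1 ∧ b.val = 0) := by
    rintro ⟨h1, h2⟩
    refine hne ?_
    rw [Sym2.eq_iff]
    exact Or.inl ⟨val_inj'.mpr (by rw [hx0]; exact h1), (ZMod.val_eq_zero b).mp h2⟩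
  have hne2 : ¬ (a.val = 0 ∧ b.val = l - 1) := by
    rintro ⟨h1, h2⟩
    refine hne ?_
    rw [Sym2.eq_iff]
    exact Or.inr ⟨(ZMod.val_eq_zero a).mp h1, val_inj'.mpr (by rw [hx0]; exact h2)⟩
  rw [chordLen_mk, le_min_iff] at hlen ⊢
  rw [f1, g1]
  rw [f2, g2] at hlen
  split_ifs at hlen ⊢ <;> omega

lemma contract_step {l : ℕ} (hl : 3 ≤ l) (S : Finset (Sym2 (ZMod (l + 1))))
    (hlen : ∀ p ∈ S, 2 ≤ chordLen p)
    (hcr : ∀ p ∈ S, ∀ q ∈ S, p ≠ q → ¬ Crosses p q)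
    (htop : ∀ q ∈ S, ∀ x ∈ q, x.val < l)
    (hne : s(((l - 1 : ℕ) : ZMod (l + 1)), (0 : ZMod (l + 1))) ∉ S) :
    (S.image (Sym2.map (piC l))).card = S.card ∧
      (∀ p ∈ S.image (Sym2.map (piC l)), 2 ≤ chordLen p) ∧
      (∀ p ∈ S.image (Sym2.map (piC l)), ∀ q ∈ S.image (Sym2.map (piC l)),
        p ≠ q → ¬ Crosses p q) := by
  have hl0 : 0 < l := by omega
  have hinj : ∀ x y : ZMod (l + 1), x.val < l → y.val < l → piC l x = piC l y → x = y := by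
    intro x y hx hy hxy
    have : (piC l x).val = (piC l y).val := by rw [hxy]
    rw [pi_val hl0 hx, pi_val hl0 hy] at this
    exact val_inj'.mpr this
  refine ⟨?_, ?_, ?_⟩
  · apply Finset.card_image_of_injOn
    intro p hp q hq hpq
    obtain ⟨a, b, rfl⟩ := sym2_rep p
    obtain ⟨u, v, rfl⟩ := sym2_rep q
    rw [Sym2.map_pair_eq, Sym2.map_pair_eq, Sym2.eq_iff] at hpq
    have ha := htop _ hp _ (Sym2.mem_mk_left a b)
    have hb := htop _ hp _ (Sym2.mem_mk_right a b)
    have hu := htop _ hq _ (Sym2.mem_mk_left u v)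
    have hv := htop _ hq _ (Sym2.mem_mk_right u v)
    rw [Sym2.eq_iff]
    rcases hpq with ⟨h1, h2⟩ | ⟨h1, h2⟩
    · exact Or.inl ⟨hinj _ _ ha hu h1, hinj _ _ hb hv h2⟩
    · exact Or.inr ⟨hinj _ _ ha hv h1, hinj _ _ hb hu h2⟩
  · intro p hp
    obtain ⟨q, hq, rfl⟩ := Finset.mem_image.mp hp
    obtain ⟨a, b, rfl⟩ := sym2_rep q
    rw [Sym2.map_pair_eq]
    exact pi_chordLen hl (htop _ hq _ (Sym2.mem_mk_left a b))
      (htop _ hq _ (Sym2.mem_mk_right a b)) (hlen _ hq) (fun hh => hne (hh ▸ hq))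
  · intro p hp q hq hne' hcross
    obtain ⟨p₀, hp₀, rfl⟩ := Finset.mem_image.mp hp
    obtain ⟨q₀, hq₀, rfl⟩ := Finset.mem_image.mp hq
    obtain ⟨a, b, rfl⟩ := sym2_rep p₀
    obtain ⟨u, v, rfl⟩ := sym2_rep q₀
    refine hcr _ hp₀ _ hq₀ (fun hh => hne' (by rw [hh])) ?_
    exact crosses_lift (fun x => x.val < l) (piC l)
      (fun x y z hx hy hz => pi_inArc hl0 hx hy hz)
      (htop _ hp₀ _ (Sym2.mem_mk_left a b)) (htop _ hp₀ _ (Sym2.mem_mk_right a b))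
      (htop _ hq₀ _ (Sym2.mem_mk_left u v)) (htop _ hq₀ _ (Sym2.mem_mk_right u v)) hcross

/-- No endpoint of any chord lies strictly inside the arc of a minimal chord. -/
lemma iso {m : ℕ} [NeZero m] {S : Finset (Sym2 (ZMod m))}
    (hlen : ∀ p ∈ S, 2 ≤ chordLen p)
    (hcr : ∀ p ∈ S, ∀ q ∈ S, p ≠ q → ¬ Crosses p q)
    {a b : ZMod m} (hp : s(a, b) ∈ S)
    (hmin : ∀ u v : ZMod m, s(u, v) ∈ S → (b - a).val ≤ (v - u).val) :
    ∀ q ∈ S, ∀ x ∈ q, ¬ InArc a b x := by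
  intro q hq x hxq hIn
  obtain ⟨y, rfl⟩ := hxq
  have hxa : x ≠ a := by
    intro hh
    have := hIn.1
    rw [hh, sub_self, ZMod.val_zero] at this
    omega
  have hxb : x ≠ b := by
    intro hh
    rw [hh] at hIn
    exact absurd hIn.2 (lt_irrefl _)
  have hk2 : 2 ≤ (b - a).val := rep_val_ge hlen hp
  have hq2 : 2 ≤ (y - x).val := rep_val_ge hlen hq
  have hq2' : 2 ≤ (x - y).val := rep_val_ge hlen (sym2_swap_mem hq)
  have hxy : x ≠ y := by
    intro hh
    rw [hh, sub_self, ZMod.val_zero] at hq2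
    omega
  by_cases hya : y = a
  · subst hya
    have := hmin y x (sym2_swap_mem hq)
    have h1 := hIn.1
    have h2 := hIn.2
    omega
  · by_cases hyb : y = b
    · subst hyb
      have hle : (x - a).val ≤ (y - a).val := le_of_lt hIn.2
      have hbx : (y - x).val = (y - a).val - (x - a).val := by
        have h1 : ((y - a) - (x - a)).val = (y - a).val - (x - a).val := sub_val_le hle
        rw [show (y - a) - (x - a) = y - x by ring] at h1
        exact h1
      have := hmin x y hq
      have := hIn.1
      have := hIn.2
      omega
    · by_cases hInY : InArc a b y
      · have hne' : (x - a).val ≠ (y - a).val := by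
          intro hh
          exact hxy (sub_left_injective (val_inj'.mpr hh))
        rcases lt_or_gt_of_ne hne' with hlt | hgt
        · have h1 : (y - x).val = (y - a).val - (x - a).val := by
            have h2 := sub_val_le (le_of_lt hlt)
            rw [show (y - a) - (x - a) = y - x by ring] at h2
            exact h2
          have := hmin x y hq
          have := hInY.2
          have := hIn.1
          omega
        · have h1 : (x - y).val = (x - a).val - (y - a).val := by
            have h2 := sub_val_le (le_of_lt hgt)
            rw [show (x - a) - (y - a) = x - y by ring] at h2
            exact h2
          have := hmin y x (sym2_swap_mem hq)
          have := hInY.1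
          have := hIn.2
          omega
      · have hab : a ≠ b := by
          intro hh
          rw [hh, sub_self, ZMod.val_zero] at hk2
          omega
        have hay : a ≠ y := fun hh => hya hh.symm
        have hby : b ≠ y := fun hh => hyb hh.symm
        have hpq : s(a, b) ≠ s(x, y) := by
          intro hh
          rw [Sym2.eq_iff] at hh
          rcases hh with ⟨h1, _⟩ | ⟨h1, _⟩
          · exact hxa h1.symm
          · exact hay h1
        exact hcr _ hp _ hq hpq
          ⟨a, b, x, y, rfl, rfl, hab, Ne.symm hxa, hay, Ne.symm hxb, hby, hxy,
            Or.inl ⟨hIn, hInY⟩⟩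

lemma noncross_bound : ∀ m : ℕ, 3 ≤ m → ∀ S : Finset (Sym2 (ZMod m)),
    (∀ p ∈ S, 2 ≤ chordLen p) → (∀ p ∈ S, ∀ q ∈ S, p ≠ q → ¬ Crosses p q) →
    S.card ≤ m - 3 := by
  intro m
  induction m using Nat.strong_induction_on with
  | _ m IH =>
  intro hm S hlen hcr
  haveI : NeZero m := ⟨by omega⟩
  rcases Finset.eq_empty_or_nonempty S with rfl | ⟨p₀, hp₀⟩
  · simp
  obtain ⟨a₀, b₀, hab₀⟩ := sym2_rep p₀
  rw [hab₀] at hp₀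
  have h1 := rep_val_ge hlen hp₀
  have h2 := rep_val_ge hlen (sym2_swap_mem hp₀)
  have hab : a₀ ≠ b₀ := by
    intro hh
    rw [hh, sub_self, ZMod.val_zero] at h1
    omega
  have hm4 : 4 ≤ m := by
    have := sub_val_add_sub_val hab
    omega
  obtain ⟨l, rfl⟩ : ∃ l, m = l + 1 := ⟨m - 1, by omega⟩
  have hl3 : 3 ≤ l := by omega
  have hPex : ∃ j, ∃ u v : ZMod (l + 1), s(u, v) ∈ S ∧ (v - u).val = j :=
    ⟨_, a₀, b₀, hp₀, rfl⟩
  obtain ⟨a, b, hpS, hkval⟩ := Nat.find_spec hPex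
  set k := Nat.find hPex with hkdef
  have hmin : ∀ u v : ZMod (l + 1), s(u, v) ∈ S → k ≤ (v - u).val :=
    fun u v h => Nat.find_min' hPex ⟨u, v, h, rfl⟩
  have hk2 : 2 ≤ k := by rw [← hkval]; exact rep_val_ge hlen hpS
  set A : ZMod (l + 1) := ((l - 1 : ℕ) : ZMod (l + 1)) with hA
  set c : ZMod (l + 1) := A - a with hc
  set S' : Finset (Sym2 (ZMod (l + 1))) := S.image (Sym2.map (fun x => x + c)) with hS'
  have hcard' : S'.card = S.card := Finset.card_image_of_injective _ (map_rot_inj c)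
  have hlen' := rot_image_len c hlen
  have hcr' := rot_image_cr c hcr
  have hac : a + c = A := by rw [hc]; ring
  have hp' : s(A, b + c) ∈ S' := by
    rw [← hac]
    exact Finset.mem_image.mpr ⟨s(a, b), hpS, by rw [Sym2.map_pair_eq]⟩
  have hmin' : ∀ u v : ZMod (l + 1), s(u, v) ∈ S' → (b + c - (A)).val ≤ (v - u).val := by
    intro u v h
    rw [← hac, rot_sub, hkval]
    obtain ⟨q, hqS, hq⟩ := Finset.mem_image.mp h
    obtain ⟨w, z, rfl⟩ := sym2_rep q
    rw [Sym2.map_pair_eq, Sym2.eq_iff] at hq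
    rcases hq with ⟨e1, e2⟩ | ⟨e1, e2⟩
    · rw [← e1, ← e2, rot_sub]; exact hmin _ _ hqS
    · rw [← e1, ← e2, rot_sub]; exact hmin _ _ (sym2_swap_mem hqS)
  have hIso := iso hlen' hcr' hp' hmin'
  have hAval : A.val = l - 1 := by
    rw [hA, ZMod.val_natCast]; exact Nat.mod_eq_of_lt (by omega)
  have hR : (b + c - A).val = k := by rw [← hac, rot_sub, hkval]
  have htop : ∀ q ∈ S', ∀ x ∈ q, x.val < l := by
    intro q hq x hx
    have hxlt := ZMod.val_lt x
    rcases Nat.lt_or_ge x.val l with h | h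
    · exact h
    · exfalso
      have hxl : x.val = l := by omega
      refine hIso q hq x hx ⟨?_, ?_⟩
      · rw [sub_val_le (show A.val ≤ x.val by omega), hAval, hxl]; omega
      · rw [sub_val_le (show A.val ≤ x.val by omega), hAval, hxl, hR]; omega
  have h0A : ((0 : ZMod (l + 1)) - A).val = 2 := by
    rw [sub_val_gt (show (0 : ZMod (l + 1)).val < A.val by rw [ZMod.val_zero, hAval]; omega),
      ZMod.val_zero, hAval]
    omega
  by_cases hk : k = 2
  · have hbc0 : b + c = 0 := by
      have hba : b - a = 0 - A := val_inj'.mpr (by rw [hkval, hk, h0A])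
      calc b + c = a + c + (b - a) := by ring
      _ = A + (0 - A) := by rw [hac, hba]
      _ = 0 := by ring
    have he' : s(A, (0 : ZMod (l + 1))) ∈ S' := by rw [← hbc0]; exact hp'
    set S₁ := S'.erase s(A, (0 : ZMod (l + 1))) with hS₁
    have hsub : S₁ ⊆ S' := Finset.erase_subset _ _
    have hcs := contract_step hl3 S₁ (fun p hp => hlen' p (hsub hp))
      (fun p hp q hq => hcr' p (hsub hp) q (hsub hq))
      (fun q hq x hx => htop q (hsub hq) x hx)
      (by rw [← hA]; exact Finset.notMem_erase _ _)
    have hcard₁ : S₁.card = S.card - 1 := by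
      rw [hS₁, Finset.card_erase_of_mem he', hcard']
    have hbd := IH l (by omega) hl3 _ hcs.2.1 hcs.2.2
    have hS0 : 1 ≤ S.card := Finset.card_pos.mpr ⟨_, hp₀⟩
    have := hcs.1
    omega
  · have hnotin : s(((l - 1 : ℕ) : ZMod (l + 1)), (0 : ZMod (l + 1))) ∉ S' := by
      rw [← hA]
      intro hmem
      have hv := hmin' _ _ hmem
      rw [hR, h0A] at hv
      omega
    have hcs := contract_step hl3 S' hlen' hcr' htop hnotin
    have hbd := IH l (by omega) hl3 _ hcs.2.1 hcs.2.2
    have := hcs.1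
    omega

lemma ear_exists {n : ℕ} (hn : 4 ≤ n) (T : Finset (Sym2 (ZMod (n + 1))))
    (hcard : T.card = n + 1 - 3)
    (hlen : ∀ p ∈ T, 2 ≤ chordLen p)
    (hcr : ∀ p ∈ T, ∀ q ∈ T, p ≠ q → ¬ Crosses p q) :
    ∃ a : ZMod (n + 1), s(a, a + 2) ∈ T := by
  haveI : NeZero (n + 1) := ⟨by omega⟩
  have hne : T.Nonempty := by
    rw [← Finset.card_pos, hcard]; omega
  obtain ⟨p₀, hp₀⟩ := hne
  obtain ⟨a₀, b₀, hab₀⟩ := sym2_rep p₀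
  rw [hab₀] at hp₀
  have hPex : ∃ j, ∃ u v : ZMod (n + 1), s(u, v) ∈ T ∧ (v - u).val = j :=
    ⟨_, a₀, b₀, hp₀, rfl⟩
  obtain ⟨a, b, hpS, hkval⟩ := Nat.find_spec hPex
  set k := Nat.find hPex with hkdef
  have hmin : ∀ u v : ZMod (n + 1), s(u, v) ∈ T → k ≤ (v - u).val :=
    fun u v h => Nat.find_min' hPex ⟨u, v, h, rfl⟩
  have hk2 : 2 ≤ k := by rw [← hkval]; exact rep_val_ge hlen hpS
  by_cases hk : k = 2
  · -- ear found
    have hv2 : ((2 : ZMod (n + 1))).val = 2 := by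
      rw [show (2 : ZMod (n + 1)) = ((2 : ℕ) : ZMod (n + 1)) by norm_cast, ZMod.val_natCast]
      exact Nat.mod_eq_of_lt (by omega)
    have hb2 : b = a + 2 := by
      have hba : b - a = 2 := val_inj'.mpr (by rw [hkval, hk, hv2])
      calc b = a + (b - a) := by ring
      _ = a + 2 := by rw [hba]
    exact ⟨a, by rw [← hb2]; exact hpS⟩
  · exfalso
    have hl3 : 3 ≤ n := by omega
    set A : ZMod (n + 1) := ((n - 1 : ℕ) : ZMod (n + 1)) with hA
    set c : ZMod (n + 1) := A - a with hc
    set S' : Finset (Sym2 (ZMod (n + 1))) := T.image (Sym2.map (fun x => x + c)) with hS'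
    have hcard' : S'.card = T.card := Finset.card_image_of_injective _ (map_rot_inj c)
    have hlen' := rot_image_len c hlen
    have hcr' := rot_image_cr c hcr
    have hac : a + c = A := by rw [hc]; ring
    have hp' : s(A, b + c) ∈ S' := by
      rw [← hac]
      exact Finset.mem_image.mpr ⟨s(a, b), hpS, by rw [Sym2.map_pair_eq]⟩
    have hmin' : ∀ u v : ZMod (n + 1), s(u, v) ∈ S' → (b + c - A).val ≤ (v - u).val := by
      intro u v h
      rw [← hac, rot_sub, hkval]
      obtain ⟨q, hqS, hq⟩ := Finset.mem_image.mp h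
      obtain ⟨w, z, rfl⟩ := sym2_rep q
      rw [Sym2.map_pair_eq, Sym2.eq_iff] at hq
      rcases hq with ⟨e1, e2⟩ | ⟨e1, e2⟩
      · rw [← e1, ← e2, rot_sub]; exact hmin _ _ hqS
      · rw [← e1, ← e2, rot_sub]; exact hmin _ _ (sym2_swap_mem hqS)
    have hIso := iso hlen' hcr' hp' hmin'
    have hAval : A.val = n - 1 := by
      rw [hA, ZMod.val_natCast]; exact Nat.mod_eq_of_lt (by omega)
    have hR : (b + c - A).val = k := by rw [← hac, rot_sub, hkval]
    have htop : ∀ q ∈ S', ∀ x ∈ q, x.val < n := by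
      intro q hq x hx
      have hxlt := ZMod.val_lt x
      rcases Nat.lt_or_ge x.val n with h | h
      · exact h
      · exfalso
        have hxl : x.val = n := by omega
        refine hIso q hq x hx ⟨?_, ?_⟩
        · rw [sub_val_le (show A.val ≤ x.val by omega), hAval, hxl]; omega
        · rw [sub_val_le (show A.val ≤ x.val by omega), hAval, hxl, hR]; omega
    have h0A : ((0 : ZMod (n + 1)) - A).val = 2 := by
      rw [sub_val_gt (show (0 : ZMod (n + 1)).val < A.val by rw [ZMod.val_zero, hAval]; omega),
        ZMod.val_zero, hAval]
      omega
    have hnotin : s(((n - 1 : ℕ) : ZMod (n + 1)), (0 : ZMod (n + 1))) ∉ S' := by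
      rw [← hA]
      intro hmem
      have hv := hmin' _ _ hmem
      rw [hR, h0A] at hv
      omega
    have hcs := contract_step hl3 S' hlen' hcr' htop hnotin
    have hbd := noncross_bound n (by omega) _ hcs.2.1 hcs.2.2
    have h1 := hcs.1
    omega

/-- Every triangulation of the `m`-gon, `m = n + 1 ≥ 5`, arises, up to a
rotation of the vertex labels, as the subdivision of a triangulation of the `(m-1)`-gon at the
boundary edge `{m-2, 0}`. -/
theorem every_triangulation_is_rotated_subdiv (n : ℕ) (hn : 5 ≤ n + 1)
    (T'' : Finset (Sym2 (ZMod (n + 1)))) (hT'' : IsTriangulation (n + 1) T'') :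
    ∃ (c : ZMod (n + 1)) (T : Finset (Sym2 (ZMod n))),
      IsTriangulation n T ∧
      T'' = (subdiv n T).image (Sym2.map (fun x => x + c)) := by
  have hn4 : 4 ≤ n := by omega
  haveI : NeZero (n + 1) := ⟨by omega⟩
  obtain ⟨hcard, hlen, hcr⟩ := hT''
  obtain ⟨a, hear⟩ := ear_exists hn4 T'' hcard hlen hcr
  set A : ZMod (n + 1) := ((n - 1 : ℕ) : ZMod (n + 1)) with hA
  have hAval : A.val = n - 1 := by
    rw [hA, ZMod.val_natCast]; exact Nat.mod_eq_of_lt (by omega)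
  have hA2 : A + 2 = 0 := by
    rw [hA, show ((n - 1 : ℕ) : ZMod (n + 1)) + 2 = ((n - 1 + 2 : ℕ) : ZMod (n + 1)) by push_cast; ring,
      show n - 1 + 2 = n + 1 by omega, ZMod.natCast_self]
  set c₀ : ZMod (n + 1) := A - a with hc₀
  set R : Finset (Sym2 (ZMod (n + 1))) := T''.image (Sym2.map (fun x => x + c₀)) with hRdef
  have hcardR : R.card = n - 2 := by
    rw [hRdef, Finset.card_image_of_injective _ (map_rot_inj c₀), hcard]; omega
  have hlenR := rot_image_len c₀ hlen
  have hcrR := rot_image_cr c₀ hcr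
  have hac : a + c₀ = A := by rw [hc₀]; ring
  have he : s(A, (0 : ZMod (n + 1))) ∈ R := by
    rw [hRdef]
    refine Finset.mem_image.mpr ⟨s(a, a + 2), hear, ?_⟩
    rw [Sym2.map_pair_eq, hac,
      show a + 2 + c₀ = (0 : ZMod (n + 1)) by rw [show a + 2 + c₀ = a + c₀ + 2 by ring, hac, hA2]]
  have h0A : ((0 : ZMod (n + 1)) - A).val = 2 := by
    rw [sub_val_gt (show (0 : ZMod (n + 1)).val < A.val by rw [ZMod.val_zero, hAval]; omega),
      ZMod.val_zero, hAval]
    omega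
  have hminR : ∀ u v : ZMod (n + 1), s(u, v) ∈ R → ((0 : ZMod (n + 1)) - A).val ≤ (v - u).val := by
    intro u v h
    rw [h0A]
    exact rep_val_ge hlenR h
  have hIso := iso hlenR hcrR he hminR
  have htopR : ∀ q ∈ R, ∀ x ∈ q, x.val < n := by
    intro q hq x hx
    have hxlt := ZMod.val_lt x
    rcases Nat.lt_or_ge x.val n with h | h
    · exact h
    · exfalso
      have hxn : x.val = n := by omega
      refine hIso q hq x hx ⟨?_, ?_⟩
      · rw [sub_val_le (show A.val ≤ x.val by omega), hAval, hxn]; omega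
      · rw [sub_val_le (show A.val ≤ x.val by omega), hAval, hxn, h0A]; omega
  set S : Finset (Sym2 (ZMod (n + 1))) := R.erase s(A, (0 : ZMod (n + 1))) with hS
  have hsub : S ⊆ R := Finset.erase_subset _ _
  have hcs := contract_step (show 3 ≤ n by omega) S
    (fun p hp => hlenR p (hsub hp))
    (fun p hp q hq => hcrR p (hsub hp) q (hsub hq))
    (fun q hq x hx => htopR q (hsub hq) x hx)
    (by rw [← hA]; exact Finset.notMem_erase _ _)
  set T : Finset (Sym2 (ZMod n)) := S.image (Sym2.map (piC n)) with hT
  have hcardT : T.card = n - 3 := by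
    rw [hT, hcs.1, hS, Finset.card_erase_of_mem he, hcardR]
    omega
  refine ⟨-c₀, T, ⟨hcardT, hcs.2.1, hcs.2.2⟩, ?_⟩
  have hTS : T.image (Sym2.map (fun x : ZMod n => ((x.val : ℕ) : ZMod (n + 1)))) = S := by
    rw [hT, Finset.image_image]
    have heq : ∀ p ∈ S,
        (Sym2.map (fun x : ZMod n => ((x.val : ℕ) : ZMod (n + 1))) ∘ Sym2.map (piC n)) p = p := by
      intro p hp
      obtain ⟨u, v, rfl⟩ := sym2_rep p
      have hu := htopR _ (hsub hp) _ (Sym2.mem_mk_left u v)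
      have hv := htopR _ (hsub hp) _ (Sym2.mem_mk_right u v)
      simp only [Function.comp_apply, Sym2.map_pair_eq]
      rw [Sym2.eq_iff]
      left
      constructor
      · rw [pi_val (by omega) hu]
        exact ZMod.natCast_rightInverse u
      · rw [pi_val (by omega) hv]
        exact ZMod.natCast_rightInverse v
    calc S.image (Sym2.map (fun x : ZMod n => ((x.val : ℕ) : ZMod (n + 1))) ∘ Sym2.map (piC n))
        = S.image id := Finset.image_congr (fun p hp => heq p hp)
      _ = S := Finset.image_id
  have hsubdiv : subdiv n T = R := by
    unfold subdiv
    rw [hTS, ← hA, Finset.union_comm, ← Finset.insert_eq, hS, Finset.insert_erase he]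
  rw [hsubdiv, hRdef, Finset.image_image]
  have heq2 : ∀ p ∈ T'',
      (Sym2.map (fun x => x + -c₀) ∘ Sym2.map (fun x => x + c₀)) p = id p := by
    intro p hp
    obtain ⟨u, v, rfl⟩ := sym2_rep p
    simp only [Function.comp_apply, Sym2.map_pair_eq, id]
    rw [Sym2.eq_iff]
    left
    constructor <;> ring
  rw [Finset.image_congr (fun p hp => heq2 p hp), Finset.image_id]
end

section
/- Let k ≥ 1 and let T be a triangulation of the n-gon such that m_T(e) ≤ 2k for every boundary edge e (i.e., every boundary edge has layer number at most k). Then n ≤ 3·2^k. -/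
open scoped Classical

namespace LayerBound

def IsNC (S : Finset (ℕ × ℕ)) : Prop :=
  ∀ p ∈ S, ∀ q ∈ S, ¬(p.1 < q.1 ∧ q.1 < p.2 ∧ p.2 < q.2)

def IsLen (S : Finset (ℕ × ℕ)) : Prop := ∀ p ∈ S, p.1 + 2 ≤ p.2

noncomputable def maxSet (S : Finset (ℕ × ℕ)) : Finset (ℕ × ℕ) :=
  S.filter (fun p => ∀ q ∈ S, q.1 ≤ p.1 → p.2 ≤ q.2 → q = p)

noncomputable def under (S : Finset (ℕ × ℕ)) (m : ℕ × ℕ) : Finset (ℕ × ℕ) :=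
  S.filter (fun p => m.1 ≤ p.1 ∧ p.2 ≤ m.2)

lemma maxSet_subset {S : Finset (ℕ × ℕ)} : maxSet S ⊆ S := Finset.filter_subset _ _

lemma under_subset {S : Finset (ℕ × ℕ)} {m} : under S m ⊆ S := Finset.filter_subset _ _

lemma exists_max {S : Finset (ℕ × ℕ)} (hl : IsLen S) {p} (hp : p ∈ S) :
    ∃ m ∈ maxSet S, m.1 ≤ p.1 ∧ p.2 ≤ m.2 := by
  classical
  set C := S.filter (fun q => q.1 ≤ p.1 ∧ p.2 ≤ q.2) with hC
  have hpC : p ∈ C := by simp [hC, hp]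
  obtain ⟨m, hmC, hmax⟩ := C.exists_max_image (fun q => q.2 - q.1) ⟨p, hpC⟩
  simp only [hC, Finset.mem_filter] at hmC
  refine ⟨m, ?_, hmC.2⟩
  simp only [maxSet, Finset.mem_filter]
  refine ⟨hmC.1, fun q hq hq1 hq2 => ?_⟩
  have hqC : q ∈ C := by
    simp only [hC, Finset.mem_filter]
    exact ⟨hq, le_trans hq1 hmC.2.1, le_trans hmC.2.2 hq2⟩
  have h1 := hmax q hqC
  have hpl := hl p hp
  have : q.1 = m.1 ∧ q.2 = m.2 := by
    constructor <;> omega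
  exact Prod.ext this.1 this.2

lemma max_disj {S : Finset (ℕ × ℕ)} (hnc : IsNC S) {m m'} (hm : m ∈ maxSet S)
    (hm' : m' ∈ maxSet S) (hne : m ≠ m') : m.2 ≤ m'.1 ∨ m'.2 ≤ m.1 := by
  simp only [maxSet, Finset.mem_filter] at hm hm'
  by_contra h
  push_neg at h
  obtain ⟨h1, h2⟩ := h
  rcases le_or_gt m.1 m'.1 with ha | ha
  · rcases le_or_gt m'.2 m.2 with hb | hb
    · exact hne (hm'.2 m hm.1 ha hb)
    · rcases eq_or_lt_of_le ha with heq | ha'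
      · exact hne (hm.2 m' hm'.1 (le_of_eq heq.symm) (le_of_lt hb)).symm
      · exact hnc m hm.1 m' hm'.1 ⟨ha', h1, hb⟩
  · rcases le_or_gt m.2 m'.2 with hb | hb
    · exact hne (hm.2 m' hm'.1 (le_of_lt ha) hb).symm
    · exact hnc m' hm'.1 m hm.1 ⟨ha, h2, hb⟩

lemma under_disj {S : Finset (ℕ × ℕ)} (hl : IsLen S) (hnc : IsNC S) :
    ∀ m ∈ maxSet S, ∀ m' ∈ maxSet S, m ≠ m' → Disjoint (under S m) (under S m') := by
  intro m hm m' hm' hne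
  rw [Finset.disjoint_left]
  intro p hp hp'
  simp only [under, Finset.mem_filter] at hp hp'
  have := hl p hp.1
  rcases max_disj hnc hm hm' hne with h | h <;> omega

lemma card_eq_sum_under {S : Finset (ℕ × ℕ)} (hl : IsLen S) (hnc : IsNC S) :
    S.card = ∑ m ∈ maxSet S, (under S m).card := by
  rw [← Finset.card_biUnion (under_disj hl hnc)]
  congr 1
  apply Finset.Subset.antisymm
  · intro p hp
    obtain ⟨m, hm, h1, h2⟩ := exists_max hl hp
    exact Finset.mem_biUnion.mpr ⟨m, hm, by simp [under, hp, h1, h2]⟩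
  · intro p hp
    obtain ⟨m, _, hpm⟩ := Finset.mem_biUnion.mp hp
    exact under_subset hpm

lemma sum_len_le {S : Finset (ℕ × ℕ)} {c L : ℕ} (hl : IsLen S) (hnc : IsNC S)
    (hw : ∀ p ∈ S, c ≤ p.1 ∧ p.2 ≤ c + L) :
    ∑ m ∈ maxSet S, (m.2 - m.1) ≤ L := by
  have h1 : ∀ m ∈ maxSet S, m.2 - m.1 = (Finset.Ico m.1 m.2).card := by
    intro m _; simp [Nat.card_Ico]
  rw [Finset.sum_congr rfl h1]
  have hdisj : ∀ m ∈ maxSet S, ∀ m' ∈ maxSet S, m ≠ m' →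
      Disjoint (Finset.Ico m.1 m.2) (Finset.Ico m'.1 m'.2) := by
    intro m hm m' hm' hne
    rw [Finset.disjoint_left]
    intro i hi hi'
    simp only [Finset.mem_Ico] at hi hi'
    rcases max_disj hnc hm hm' hne with h | h <;> omega
  rw [← Finset.card_biUnion hdisj]
  have hsub : (maxSet S).biUnion (fun m => Finset.Ico m.1 m.2) ⊆ Finset.Ico c (c + L) := by
    intro i hi
    obtain ⟨m, hm, him⟩ := Finset.mem_biUnion.mp hi
    have hw' := hw m (maxSet_subset hm)
    simp only [Finset.mem_Ico] at him ⊢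
    omega
  calc ((maxSet S).biUnion (fun m => Finset.Ico m.1 m.2)).card
      ≤ (Finset.Ico c (c + L)).card := Finset.card_le_card hsub
    _ = L := by simp [Nat.card_Ico]

lemma count_bound : ∀ (N : ℕ) (S : Finset (ℕ × ℕ)) (c L : ℕ), S.card ≤ N → IsLen S → IsNC S →
    (∀ p ∈ S, c ≤ p.1 ∧ p.2 ≤ c + L) → 2 ≤ L → (c, c + L) ∉ S → S.card + 2 ≤ L := by
  intro N
  induction N with
  | zero =>
    intro S c L hcard _ _ _ hL _
    have : S.card = 0 := by omega
    omega
  | succ N ih =>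
    intro S c L hcard hl hnc hw hL htop
    rcases S.eq_empty_or_nonempty with rfl | hne
    · simp; omega
    have hcardsum := card_eq_sum_under hl hnc
    have hterm : ∀ m ∈ maxSet S, (under S m).card + 1 ≤ m.2 - m.1 := by
      intro m hm
      have hmS : m ∈ S := maxSet_subset hm
      have hm2 : m.1 + 2 ≤ m.2 := hl m hmS
      have hmem : m ∈ under S m := by simp [under, hmS]
      have hcardm : (under S m).card = ((under S m).erase m).card + 1 := by
        rw [Finset.card_erase_of_mem hmem]
        have : 0 < (under S m).card := Finset.card_pos.mpr ⟨m, hmem⟩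
        omega
      have hsubS : (under S m).erase m ⊆ S.erase m :=
        Finset.erase_subset_erase m under_subset
      have hSmcard : ((under S m).erase m).card ≤ N := by
        have h1 := Finset.card_le_card hsubS
        have h2 := Finset.card_erase_of_mem hmS
        omega
      have hrec : ((under S m).erase m).card + 2 ≤ m.2 - m.1 := by
        apply ih _ m.1 (m.2 - m.1) hSmcard
        · intro p hp
          exact hl p (under_subset (Finset.erase_subset _ _ hp))
        · intro p hp q hq
          exact hnc p (under_subset (Finset.erase_subset _ _ hp))
            q (under_subset (Finset.erase_subset _ _ hq))
        · intro p hp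
          have hp' := Finset.erase_subset _ _ hp
          simp only [under, Finset.mem_filter] at hp'
          omega
        · omega
        · intro hmem2
          have : (m.1, m.1 + (m.2 - m.1)) = m := by
            have : m.1 + (m.2 - m.1) = m.2 := by omega
            rw [this]
          rw [this] at hmem2
          exact (Finset.notMem_erase m _) hmem2
      omega
    have hsum2 : S.card + (maxSet S).card ≤ ∑ m ∈ maxSet S, (m.2 - m.1) := by
      calc S.card + (maxSet S).card
          = ∑ m ∈ maxSet S, ((under S m).card + 1) := by
            rw [Finset.sum_add_distrib, Finset.sum_const, smul_eq_mul, mul_one, ← hcardsum]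
        _ ≤ _ := Finset.sum_le_sum hterm
    have hsumL := sum_len_le hl hnc hw
    obtain ⟨p, hp⟩ := hne
    obtain ⟨m0, hm0, _⟩ := exists_max hl hp
    have htpos : 0 < (maxSet S).card := Finset.card_pos.mpr ⟨m0, hm0⟩
    rcases Nat.lt_or_ge (maxSet S).card 2 with h1 | h2
    · have ht1 : (maxSet S).card = 1 := by omega
      obtain ⟨m, hmeq⟩ := Finset.card_eq_one.mp ht1
      have hmm : m ∈ maxSet S := by rw [hmeq]; exact Finset.mem_singleton_self m
      have hmS : m ∈ S := maxSet_subset hmm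
      have hS : S.card = (under S m).card := by
        rw [hcardsum, hmeq, Finset.sum_singleton]
      have hlenm : m.2 - m.1 ≤ L := by
        have := hsumL; rw [hmeq, Finset.sum_singleton] at this; exact this
      have hwin := hw m hmS
      have hml := hl m hmS
      have hnontop : ¬(m.1 = c ∧ m.2 = c + L) := by
        rintro ⟨e1, e2⟩
        apply htop
        have : (c, c + L) = m := Prod.ext e1.symm e2.symm
        rw [this]; exact hmS
      have hterm' := hterm m hmm
      omega
    · omega

lemma key : ∀ (N : ℕ) (S : Finset (ℕ × ℕ)) (c L j d : ℕ), S.card ≤ N → IsLen S → IsNC S →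
    (∀ p ∈ S, c ≤ p.1 ∧ p.2 ≤ c + L) →
    (∀ i, c ≤ i → i < c + L → (S.filter (fun p => p.1 ≤ i ∧ i < p.2)).card ≤ j) →
    L ≤ S.card + 2 + d → L ≤ (d + 2) * 2 ^ j := by
  intro N
  induction N with
  | zero =>
    intro S c L j d hcard _ _ _ _ h3
    have h0 : S.card = 0 := by omega
    have hP : 1 ≤ 2 ^ j := Nat.one_le_two_pow
    calc L ≤ (d + 2) * 1 := by omega
      _ ≤ (d + 2) * 2 ^ j := Nat.mul_le_mul_left _ hP
  | succ N ih =>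
    intro S c L j d hcard hl hnc hw hcov h3
    rcases S.eq_empty_or_nonempty with rfl | hne
    · have hP : 1 ≤ 2 ^ j := Nat.one_le_two_pow
      simp only [Finset.card_empty] at h3
      calc L ≤ (d + 2) * 1 := by omega
        _ ≤ (d + 2) * 2 ^ j := Nat.mul_le_mul_left _ hP
    obtain ⟨p0, hp0⟩ := hne
    have hj1 : 1 ≤ j := by
      have hwp := hw p0 hp0
      have hlp := hl p0 hp0
      have hc := hcov p0.1 hwp.1 (by omega)
      have hmem : p0 ∈ S.filter (fun p => p.1 ≤ p0.1 ∧ p0.1 < p.2) := by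
        simp only [Finset.mem_filter]
        exact ⟨hp0, le_refl _, by omega⟩
      have := Finset.card_pos.mpr ⟨p0, hmem⟩
      omega
    obtain ⟨j', rfl⟩ : ∃ j', j = j' + 1 := ⟨j - 1, by omega⟩
    -- abbreviations
    set b : ℕ × ℕ → ℕ := fun m => ((under S m).erase m).card with hb
    set ll : ℕ × ℕ → ℕ := fun m => m.2 - m.1 with hll
    set dd : ℕ × ℕ → ℕ := fun m => ll m - (b m + 2) with hdd
    have hmfacts : ∀ m ∈ maxSet S, b m + 2 + dd m = ll m ∧ ll m ≤ (dd m + 2) * 2 ^ j' := by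
      intro m hm
      have hmS : m ∈ S := maxSet_subset hm
      have hm2 : m.1 + 2 ≤ m.2 := hl m hmS
      have hmem : m ∈ under S m := by simp [under, hmS]
      have hsubS : (under S m).erase m ⊆ S.erase m :=
        Finset.erase_subset_erase m under_subset
      have hSmcard : b m ≤ N := by
        have h1 := Finset.card_le_card hsubS
        have h2 := Finset.card_erase_of_mem hmS
        simp only [hb]
        omega
      have hlenSm : IsLen ((under S m).erase m) := fun p hp =>
        hl p (under_subset (Finset.erase_subset _ _ hp))
      have hncSm : IsNC ((under S m).erase m) := fun p hp q hq =>
        hnc p (under_subset (Finset.erase_subset _ _ hp))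
          q (under_subset (Finset.erase_subset _ _ hq))
      have hwinSm : ∀ p ∈ (under S m).erase m, m.1 ≤ p.1 ∧ p.2 ≤ m.1 + ll m := by
        intro p hp
        have hp' := Finset.erase_subset _ _ hp
        simp only [under, Finset.mem_filter] at hp'
        simp only [hll]
        omega
      have hcount : b m + 2 ≤ ll m := by
        apply count_bound N _ m.1 (ll m) hSmcard hlenSm hncSm hwinSm (by simp only [hll]; omega)
        intro hmem2
        have heq : (m.1, m.1 + ll m) = m := by
          have : m.1 + ll m = m.2 := by simp only [hll]; omega
          rw [this]
        rw [heq] at hmem2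
        exact (Finset.notMem_erase m _) hmem2
      refine ⟨by simp only [hdd]; omega, ?_⟩
      apply ih _ m.1 (ll m) j' (dd m) hSmcard hlenSm hncSm hwinSm
      · intro i hi1 hi2
        have hiL : c ≤ i ∧ i < c + L := by
          have := hw m hmS
          simp only [hll] at hi2
          omega
        have hmcov : m ∈ S.filter (fun p => p.1 ≤ i ∧ i < p.2) := by
          simp only [Finset.mem_filter]
          refine ⟨hmS, hi1, by simp only [hll] at hi2; omega⟩
        have hsub2 : ((under S m).erase m).filter (fun p => p.1 ≤ i ∧ i < p.2) ⊆
            (S.filter (fun p => p.1 ≤ i ∧ i < p.2)).erase m := by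
          intro q hq
          have hq1 := Finset.mem_filter.mp hq
          have hq2 := Finset.mem_erase.mp hq1.1
          exact Finset.mem_erase.mpr ⟨hq2.1,
            Finset.mem_filter.mpr ⟨under_subset hq2.2, hq1.2⟩⟩
        have h5 := Finset.card_le_card hsub2
        have h6 := Finset.card_erase_lt_of_mem hmcov
        have h7 := hcov i hiL.1 hiL.2
        omega
      · show ll m ≤ b m + 2 + dd m
        have hdd2 : dd m = ll m - (b m + 2) := rfl
        omega
    -- sums
    have hcardsum := card_eq_sum_under hl hnc
    have hA0 : S.card = ∑ m ∈ maxSet S, (b m + 1) := by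
      rw [hcardsum]
      apply Finset.sum_congr rfl
      intro m hm
      have hmem : m ∈ under S m := by simp [under, maxSet_subset hm]
      have h1 : 0 < (under S m).card := Finset.card_pos.mpr ⟨m, hmem⟩
      have h2 : b m = (under S m).card - 1 := by
        simp only [hb]; rw [Finset.card_erase_of_mem hmem]
      omega
    set t := (maxSet S).card with hteq
    have hA1 : ∑ m ∈ maxSet S, ll m = S.card + (∑ m ∈ maxSet S, dd m) + t := by
      have hpt : ∀ m ∈ maxSet S, ll m = (b m + 1) + dd m + 1 := by
        intro m hm
        have := (hmfacts m hm).1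
        omega
      rw [Finset.sum_congr rfl hpt, Finset.sum_add_distrib, Finset.sum_add_distrib,
        Finset.sum_const, smul_eq_mul, mul_one, ← hA0]
    have hA2 : ∑ m ∈ maxSet S, ll m ≤ L := sum_len_le hl hnc hw
    have hA4 : ∑ m ∈ maxSet S, ll m ≤ ((∑ m ∈ maxSet S, dd m) + 2 * t) * 2 ^ j' := by
      calc ∑ m ∈ maxSet S, ll m ≤ ∑ m ∈ maxSet S, (dd m + 2) * 2 ^ j' :=
            Finset.sum_le_sum (fun m hm => (hmfacts m hm).2)
        _ = (∑ m ∈ maxSet S, (dd m + 2)) * 2 ^ j' := (Finset.sum_mul _ _ _).symm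
        _ = ((∑ m ∈ maxSet S, dd m) + 2 * t) * 2 ^ j' := by
            rw [Finset.sum_add_distrib, Finset.sum_const]
            simp only [smul_eq_mul, hteq]
            ring_nf
    set E := ∑ m ∈ maxSet S, dd m with hE
    set A := ∑ m ∈ maxSet S, ll m with hA
    have hP : 1 ≤ 2 ^ j' := Nat.one_le_two_pow
    have htE : t + E ≤ 2 + d := by omega
    obtain ⟨r, hr⟩ : ∃ r, t + E + r = 2 + d := ⟨2 + d - (t + E), by omega⟩
    calc L ≤ A + r := by omega
      _ ≤ (E + 2 * t) * 2 ^ j' + r * 2 ^ j' := by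
          refine add_le_add hA4 ?_
          exact Nat.le_mul_of_pos_right _ (by omega)
      _ = (E + 2 * t + r) * 2 ^ j' := by ring
      _ ≤ ((d + 2) + (d + 2)) * 2 ^ j' := by
          apply Nat.mul_le_mul_right
          omega
      _ = (d + 2) * 2 ^ (j' + 1) := by rw [pow_succ]; ring



lemma sym2_exists {α : Type*} (z : Sym2 α) : ∃ x y, z = s(x, y) :=
  Sym2.ind (fun x y => ⟨x, y, rfl⟩) z

lemma chordLen_mk {n : ℕ} (x y : ZMod n) :
    chordLen s(x, y) = min (y - x).val (x - y).val := rfl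

section ZModFacts

variable {n : ℕ} [NeZero n]

lemma val_sub' (x y : ZMod n) : (y - x).val = (y.val + n - x.val) % n := by
  have hx : x.val ≤ y.val + n := by have := ZMod.val_lt x; omega
  have h1 : ((y.val + n - x.val : ℕ) : ZMod n) = y - x := by
    rw [Nat.cast_sub hx]
    push_cast [ZMod.natCast_zmod_val, ZMod.natCast_self]
    ring
  rw [← h1, ZMod.val_natCast]

lemma val_chain (x y z : ZMod n) : (z - x).val = ((z - y).val + (y - x).val) % n := by
  have h : z - x = (z - y) + (y - x) := by ring
  rw [h, ZMod.val_add]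

lemma sub_val_add (x y : ZMod n) (h : x ≠ y) : (y - x).val + (x - y).val = n := by
  have h1 : (y - x).val < n := ZMod.val_lt _
  have h2 : (x - y).val < n := ZMod.val_lt _
  have h5 : (y - x).val ≠ 0 := by
    rw [Ne, ZMod.val_eq_zero]
    exact sub_ne_zero.mpr (Ne.symm h)
  have h6 : (x - y).val ≠ 0 := by
    rw [Ne, ZMod.val_eq_zero]
    exact sub_ne_zero.mpr h
  have h7 : ((y - x) + (x - y)).val = ((y - x).val + (x - y).val) % n := ZMod.val_add _ _
  have h8 : (y - x) + (x - y) = 0 := by ring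
  rw [h8, ZMod.val_zero] at h7
  set s1 := (y - x).val
  set s2 := (x - y).val
  rcases Nat.lt_or_ge (s1 + s2) n with hlt | hge
  · rw [Nat.mod_eq_of_lt hlt] at h7; omega
  · have he : s1 + s2 = (s1 + s2 - n) + n := by omega
    rw [he, Nat.add_mod_right, Nat.mod_eq_of_lt (by omega)] at h7
    omega

lemma ne_of_val_ne {x z : ZMod n} {w : ZMod n} (h : (z - x).val ≠ (w - x).val) : z ≠ w := by
  intro he; exact h (by rw [he])

lemma ne_of_val_pos {x z : ZMod n} (h : (z - x).val ≠ 0) : x ≠ z := by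
  intro he; subst he; simp at h

lemma orient_unique {x y x' y' : ZMod n} (h : s(x, y) = s(x', y'))
    (hs : (y - x).val < (x - y).val) (hs' : (y' - x').val ≤ (x' - y').val) :
    x' = x ∧ y' = y := by
  rcases Sym2.eq_iff.mp h with ⟨h1, h2⟩ | ⟨h1, h2⟩
  · exact ⟨h1.symm, h2.symm⟩
  · exfalso; rw [← h1, ← h2] at hs'; omega

lemma crosses_of_vals {x y z w : ZMod n}
    (h1 : 0 < (z - x).val) (h2 : (z - x).val < (y - x).val)
    (h3 : ¬(0 < (w - x).val ∧ (w - x).val < (y - x).val))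
    (h4 : (w - x).val ≠ 0) (h5 : (w - x).val ≠ (y - x).val)
    (h6 : (z - x).val ≠ (w - x).val) :
    Crosses s(x, y) s(z, w) := by
  have hxy : x ≠ y := ne_of_val_pos (by omega)
  have hxz : x ≠ z := ne_of_val_pos (by omega)
  have hxw : x ≠ w := ne_of_val_pos h4
  have hyz : y ≠ z := ne_of_val_ne (x := x) (show (y - x).val ≠ (z - x).val by omega)
  have hyw : y ≠ w := ne_of_val_ne (x := x) (show (y - x).val ≠ (w - x).val by omega)
  have hzw : z ≠ w := ne_of_val_ne (x := x) h6
  exact ⟨x, y, z, w, rfl, rfl, hxy, hxz, hxw, hyz, hyw, hzw,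
    Or.inl ⟨⟨h1, h2⟩, h3⟩⟩

def Good (v : ZMod n) (p : Sym2 (ZMod n)) : Prop :=
  ∃ x y, p = s(x, y) ∧ (y - x).val ≤ (x - y).val ∧ ¬ InArc x y v

lemma bad_extract {v x y : ZMod n} (hxy : x ≠ y) (hbad : ¬ Good v s(x, y)) :
    ∃ x' y', s(x, y) = s(x', y') ∧ (y' - x').val < (x' - y').val ∧ InArc x' y' v := by
  have hsum := sub_val_add x y hxy
  rcases lt_trichotomy (y - x).val (x - y).val with h | h | h
  · refine ⟨x, y, rfl, h, ?_⟩
    by_contra hni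
    exact hbad ⟨x, y, rfl, le_of_lt h, hni⟩
  · exfalso
    by_cases hi : InArc x y v
    · apply hbad
      refine ⟨y, x, Sym2.eq_swap, le_of_eq h.symm, ?_⟩
      intro hi2
      unfold InArc at hi hi2
      have hch : (v - x).val = ((v - y).val + (y - x).val) % n := val_chain _ _ _
      have hlt1 : (v - y).val < n := ZMod.val_lt _
      have hs : (v - y).val + (y - x).val < n := by omega
      rw [Nat.mod_eq_of_lt hs] at hch
      omega
    · exact hbad ⟨x, y, rfl, le_of_eq h, hi⟩
  · refine ⟨y, x, Sym2.eq_swap, h, ?_⟩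
    by_contra hni
    exact hbad ⟨y, x, Sym2.eq_swap, le_of_lt h, hni⟩

lemma diam_vals {x y : ZMod n} (hn : 7 ≤ n) (hd : IsDiameter s(x, y))
    (hlen : 2 ≤ chordLen s(x, y)) :
    x ≠ y ∧ (y - x).val = (x - y).val ∧ 2 * (y - x).val = n := by
  have hxy : x ≠ y := by
    intro h
    rw [h, chordLen_mk] at hlen
    simp at hlen
  have hsum := sub_val_add x y hxy
  unfold IsDiameter at hd
  rw [chordLen_mk] at hd
  refine ⟨hxy, by omega, by omega⟩

lemma val_sub_eq {a b : ZMod n} (h : (a - b).val = 0) : a = b := by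
  have := (ZMod.val_eq_zero (a - b)).mp h
  have := sub_eq_zero.mp this
  exact this

lemma eq_of_val_eq' {x a b : ZMod n} (h : (a - x).val = (b - x).val) : a = b := by
  have h1 : a - x = b - x := ZMod.val_injective n h
  have := congrArg (· + x) h1
  simpa using this

lemma diam_unique (hn : 7 ≤ n) (T : Finset (Sym2 (ZMod n))) (hT : IsTriangulation n T) :
    ∀ p ∈ T, ∀ q ∈ T, IsDiameter p → IsDiameter q → p = q := by
  intro p hp q hq hdp hdq
  by_contra hne
  obtain ⟨x, y, hp1⟩ := sym2_exists p
  obtain ⟨z, w, hq1⟩ := sym2_exists q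
  obtain ⟨hxy, hxy2, hxy3⟩ := diam_vals hn (hp1 ▸ hdp) (hp1 ▸ hT.2.1 p hp)
  obtain ⟨hzw, hzw2, hzw3⟩ := diam_vals hn (hq1 ▸ hdq) (hq1 ▸ hT.2.1 q hq)
  have hlen : 2 ≤ chordLen s(x, y) := hp1 ▸ hT.2.1 p hp
  rw [chordLen_mk] at hlen
  have hh : (w - z).val = (y - x).val := by omega
  have hchain : (w - x).val = ((w - z).val + (z - x).val) % n := val_chain _ _ _
  have hP0 : (z - x).val ≠ 0 := by
    intro h0
    have hzx : z = x := val_sub_eq h0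
    have hwy : w = y := by
      rw [hzx] at hh
      exact eq_of_val_eq' (x := x) hh
    exact hne (by rw [hp1, hq1, hzx, hwy])
  have hPh : (z - x).val ≠ (y - x).val := by
    intro h0
    have hzy : z = y := eq_of_val_eq' h0
    have hwx : w = x := by
      apply val_sub_eq
      have h1 : (w - z).val + (z - x).val = n := by omega
      rw [hchain, h1, Nat.mod_self]
    exact hne (by rw [hp1, hq1, hzy, hwx, Sym2.eq_swap])
  have hbz : (z - x).val < n := ZMod.val_lt _
  have hu2 : 2 ≤ (y - x).val := by omega
  rcases Nat.lt_or_ge (z - x).val (y - x).val with hc | hc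
  · have hwx : (w - x).val = (y - x).val + (z - x).val := by
      rw [hchain, hh, Nat.mod_eq_of_lt (by omega)]
    have hcr : Crosses s(x, y) s(z, w) :=
      crosses_of_vals (by omega) hc (by omega) (by omega) (by omega) (by omega)
    exact hT.2.2 p hp q hq hne (by rw [hp1, hq1]; exact hcr)
  · have hlt : (y - x).val < (z - x).val := by omega
    have hwx : (w - x).val = (z - x).val - (y - x).val := by
      have h1 : (w - z).val + (z - x).val =
          ((z - x).val - (y - x).val) + n := by omega
      rw [hchain, h1, Nat.add_mod_right, Nat.mod_eq_of_lt (by omega)]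
    have hcr : Crosses s(x, y) s(w, z) :=
      crosses_of_vals (by omega) (by omega) (by omega) (by omega) (by omega) (by omega)
    have hq2 : q = s(w, z) := hq1.trans Sym2.eq_swap
    exact hT.2.2 p hp q hq hne (by rw [hp1, hq2]; exact hcr)

lemma exists_goodv (hn : 7 ≤ n) (T : Finset (Sym2 (ZMod n))) (hT : IsTriangulation n T) :
    ∃ v : ZMod n, ∀ p ∈ T, Good v p := by
  classical
  set F := T.filter (fun p => ¬ Good (0 : ZMod n) p) with hF
  rcases F.eq_empty_or_nonempty with hFe | hFne
  · refine ⟨0, fun p hp => ?_⟩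
    by_contra hbad
    have hmem : p ∈ F := by rw [hF]; exact Finset.mem_filter.mpr ⟨hp, hbad⟩
    rw [hFe] at hmem
    simp at hmem
  obtain ⟨cs, hcsF, hcsmax⟩ := F.exists_max_image chordLen hFne
  have hcsT : cs ∈ T := (Finset.mem_filter.mp hcsF).1
  have hcsbad : ¬ Good (0 : ZMod n) cs := (Finset.mem_filter.mp hcsF).2
  obtain ⟨xa, yb, hcseq⟩ := sym2_exists cs
  have hxy0 : xa ≠ yb := by
    intro h
    have h2 := hT.2.1 cs hcsT
    rw [hcseq, h, chordLen_mk] at h2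
    simp at h2
  obtain ⟨a, b, hab, habs, habin⟩ := bad_extract hxy0 (hcseq ▸ hcsbad)
  have hcseq2 : cs = s(a, b) := hcseq.trans hab
  refine ⟨a, fun p hp => ?_⟩
  by_contra hbad
  obtain ⟨x0, y0, hpeq0⟩ := sym2_exists p
  have hxy1 : x0 ≠ y0 := by
    intro h
    have h2 := hT.2.1 p hp
    rw [hpeq0, h, chordLen_mk] at h2
    simp at h2
  obtain ⟨x, y, hxyeq, hstrict, hin⟩ := bad_extract hxy1 (hpeq0 ▸ hbad)
  have hpeq2 : p = s(x, y) := hpeq0.trans hxyeq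
  -- basic quantities
  have hxyne : x ≠ y := by
    intro h; rw [h] at hstrict; exact lt_irrefl _ hstrict
  have habne : a ≠ b := by
    intro h; rw [h] at habs; exact lt_irrefl _ habs
  have hsump := sub_val_add x y hxyne
  have hsumc := sub_val_add a b habne
  have hu2 : 2 ≤ (y - x).val := by
    have h2 := hT.2.1 p hp
    rw [hpeq2, chordLen_mk] at h2
    omega
  have hU2 : 2 ≤ (b - a).val := by
    have h2 := hT.2.1 cs hcsT
    rw [hcseq2, chordLen_mk] at h2
    omega
  unfold InArc at hin habin
  have hAbound : (a - x).val < n := ZMod.val_lt _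
  have hZbound : ((0 : ZMod n) - x).val < n := ZMod.val_lt _
  have hzetabound : ((0 : ZMod n) - a).val < n := ZMod.val_lt _
  have hBbound : (b - x).val < n := ZMod.val_lt _
  have chain1 : (b - x).val = ((b - a).val + (a - x).val) % n := val_chain _ _ _
  have chain2 : ((0 : ZMod n) - a).val = (((0 : ZMod n) - x).val + n - (a - x).val) % n := by
    have h0a : (0 : ZMod n) - a = ((0 : ZMod n) - x) - (a - x) := by ring
    rw [h0a, val_sub']
  have hpneq : p ≠ cs := by
    intro h
    have heq2 : s(x, y) = s(a, b) := by rw [← hpeq2, ← hcseq2, h]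
    obtain ⟨e1, e2⟩ := orient_unique heq2 hstrict (le_of_lt habs)
    rw [← e1] at hin
    simp at hin
  have hcross_exit : ¬(0 < (b - x).val ∧ (b - x).val < (y - x).val) →
      (b - x).val ≠ 0 → (b - x).val ≠ (y - x).val →
      (a - x).val ≠ (b - x).val → False := by
    intro hB3 hB4 hB5 hB6
    have hcr := crosses_of_vals (x := x) (y := y) (z := a) (w := b) hin.1 hin.2 hB3 hB4 hB5 hB6
    exact hT.2.2 p hp cs hcsT hpneq (by rw [hpeq2, hcseq2]; exact hcr)
  by_cases hZ : 0 < ((0 : ZMod n) - x).val ∧ ((0 : ZMod n) - x).val < (y - x).val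
  · -- p is bad for 0 as well, so u ≤ U by maximality
    have hpF : p ∈ F := by
      rw [hF]
      refine Finset.mem_filter.mpr ⟨hp, ?_⟩
      rintro ⟨x', y', heq', hshort', hni'⟩
      obtain ⟨e1, e2⟩ := orient_unique (hpeq2 ▸ heq' : s(x, y) = s(x', y')) hstrict hshort'
      subst e1; subst e2
      exact hni' ⟨hZ.1, hZ.2⟩
    have huU : (y - x).val ≤ (b - a).val := by
      have hmx := hcsmax p hpF
      rw [hpeq2, chordLen_mk] at hmx
      rw [hcseq2, chordLen_mk] at hmx
      omega
    have hBp : (b - x).val = (b - a).val + (a - x).val := by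
      rw [chain1, Nat.mod_eq_of_lt (by omega)]
    exact hcross_exit (by omega) (by omega) (by omega) (by omega)
  · have hUbound : (b - a).val < n := ZMod.val_lt _
    have hBp2 : (b - x).val = (b - a).val + (a - x).val ∨
        (b - x).val + n = (b - a).val + (a - x).val := by
      rcases Nat.lt_or_ge ((b - a).val + (a - x).val) n with h | h
      · left; rw [chain1, Nat.mod_eq_of_lt h]
      · right
        have h1 : (b - x).val = (b - a).val + (a - x).val - n := by
          rw [chain1]
          conv_lhs => rw [show (b - a).val + (a - x).val =
            ((b - a).val + (a - x).val - n) + n by omega]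
          rw [Nat.add_mod_right, Nat.mod_eq_of_lt (by omega)]
        omega
    have hzeta : ((0 : ZMod n) - a).val + (a - x).val = ((0 : ZMod n) - x).val ∨
        ((0 : ZMod n) - a).val + (a - x).val = ((0 : ZMod n) - x).val + n := by
      rcases le_or_gt ((a - x).val) (((0 : ZMod n) - x).val) with h | h
      · left
        have h2 : ((0 : ZMod n) - x).val + n - (a - x).val =
            (((0 : ZMod n) - x).val - (a - x).val) + n := by omega
        rw [chain2, h2, Nat.add_mod_right, Nat.mod_eq_of_lt (by omega)]
        omega
      · right
        rw [chain2, Nat.mod_eq_of_lt (by omega)]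
        omega
    by_cases hBu : (y - x).val < (b - x).val
    · exact hcross_exit (by omega) (by omega) (by omega) (by omega)
    · exfalso
      have hZ' : ((0 : ZMod n) - x).val = 0 ∨ (y - x).val ≤ ((0 : ZMod n) - x).val := by
        by_cases h0 : ((0 : ZMod n) - x).val = 0
        · exact Or.inl h0
        · right
          by_contra hlt
          exact hZ ⟨by omega, by omega⟩
      have hBu' : (b - x).val ≤ (y - x).val := by omega
      obtain ⟨hin1, hin2⟩ := hin
      obtain ⟨hbin1, hbin2⟩ := habin
      rcases hBp2 with hB | hB
      · rcases hzeta with hz | hz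
        · rcases hZ' with h0 | h0 <;> omega
        · rcases hZ' with h0 | h0 <;> omega
      · omega

end ZModFacts

noncomputable def liftv (n : ℕ) (v : ZMod n) (p : Sym2 (ZMod n)) : ℕ × ℕ :=
  Sym2.lift ⟨fun x y =>
    if 2 * (max (x - v).val (y - v).val - min (x - v).val (y - v).val) ≤ n then
      (min (x - v).val (y - v).val, max (x - v).val (y - v).val)
    else (max (x - v).val (y - v).val, n),
    fun x y => by simp [min_comm, max_comm]⟩ p

section ZModFacts2

variable {n : ℕ} [NeZero n]

lemma liftv_mk (v x y : ZMod n) : liftv n v s(x, y) =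
    if 2 * (max (x - v).val (y - v).val - min (x - v).val (y - v).val) ≤ n then
      (min (x - v).val (y - v).val, max (x - v).val (y - v).val)
    else (max (x - v).val (y - v).val, n) := by
  simp [liftv]

lemma liftv_spec_aux (hn : 7 ≤ n) (v x y : ZMod n)
    (hxy : (x - v).val < (y - v).val)
    (hlen2 : 2 ≤ chordLen s(x, y)) (hGood : Good v s(x, y)) :
    ∃ a b : ℕ, liftv n v s(x, y) = (a, b) ∧ a + 2 ≤ b ∧ b ≤ n ∧ 2 * (b - a) ≤ n ∧
      s(x, y) = s(v + (a : ZMod n), v + (b : ZMod n)) ∧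
      (IsDiameter s(x, y) ↔ 2 * (b - a) = n) ∧
      (2 * (b - a) < n → ∀ i' : ℕ, i' < n →
        ((a ≤ i' ∧ i' < b) ↔ LayersEdge s(x, y) (v + (i' : ZMod n)))) := by
  have hdxb : (x - v).val < n := ZMod.val_lt _
  have hdyb : (y - v).val < n := ZMod.val_lt _
  have hxv : x = v + (((x - v).val : ℕ) : ZMod n) := by
    rw [ZMod.natCast_zmod_val]; ring
  have hyv : y = v + (((y - v).val : ℕ) : ZMod n) := by
    rw [ZMod.natCast_zmod_val]; ring
  have hyx : (y - x).val = (y - v).val - (x - v).val := by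
    have h1 : y - x = (y - v) - (x - v) := by ring
    rw [h1, val_sub']
    have h2 : (y - v).val + n - (x - v).val = ((y - v).val - (x - v).val) + n := by omega
    rw [h2, Nat.add_mod_right, Nat.mod_eq_of_lt (by omega)]
  have hxy' : (x - y).val = n - ((y - v).val - (x - v).val) := by
    have h1 : x - y = (x - v) - (y - v) := by ring
    rw [h1, val_sub', Nat.mod_eq_of_lt (by omega)]
    omega
  have hlen2' : 2 ≤ min ((y - v).val - (x - v).val) (n - ((y - v).val - (x - v).val)) := by
    rw [chordLen_mk, hyx, hxy'] at hlen2; exact hlen2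
  have hmin : min (x - v).val (y - v).val = (x - v).val := min_eq_left hxy.le
  have hmax : max (x - v).val (y - v).val = (y - v).val := max_eq_right hxy.le
  by_cases hbr : 2 * ((y - v).val - (x - v).val) ≤ n
  · have hlift : liftv n v s(x, y) = ((x - v).val, (y - v).val) := by
      rw [liftv_mk, hmin, hmax, if_pos hbr]
    refine ⟨(x - v).val, (y - v).val, hlift, by omega, by omega, by omega, ?_, ?_, ?_⟩
    · rw [← hxv, ← hyv]
    · simp only [IsDiameter, chordLen_mk, hyx, hxy']
      omega
    · intro hlt i' hi'
      have hcov : ((v + (i' : ZMod n)) - x).val = (i' + n - (x - v).val) % n := by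
        have h1 : (v + (i' : ZMod n)) - x = ((i' : ℕ) : ZMod n) - (x - v) := by ring
        rw [h1, val_sub', ZMod.val_natCast, Nat.mod_eq_of_lt hi']
      constructor
      · rintro ⟨h1, h2⟩
        refine ⟨x, y, rfl, ?_, ?_⟩
        · rw [hyx, hxy']; omega
        · rw [hcov, hyx]
          have h3 : i' + n - (x - v).val = (i' - (x - v).val) + n := by omega
          rw [h3, Nat.add_mod_right, Nat.mod_eq_of_lt (by omega)]
          omega
      · rintro ⟨x', y', heq, hstrict, hc⟩
        have hstr0 : (y - x).val < (x - y).val := by rw [hyx, hxy']; omega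
        obtain ⟨e1, e2⟩ := orient_unique heq hstr0 (le_of_lt hstrict)
        rw [e1, e2] at hc
        rw [hcov, hyx] at hc
        rcases le_or_gt ((x - v).val) i' with h | h
        · have h3 : i' + n - (x - v).val = (i' - (x - v).val) + n := by omega
          rw [h3, Nat.add_mod_right, Nat.mod_eq_of_lt (by omega)] at hc
          omega
        · rw [Nat.mod_eq_of_lt (by omega)] at hc
          omega
  · push_neg at hbr
    have hstrict0 : (x - y).val < (y - x).val := by rw [hyx, hxy']; omega
    obtain ⟨x', y', heq, hshort, hni⟩ := hGood
    obtain ⟨e1, e2⟩ := orient_unique (Sym2.eq_swap.trans heq : s(y, x) = s(x', y'))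
      hstrict0 hshort
    rw [e1, e2] at hni
    have hdy1 : 1 ≤ (y - v).val := by omega
    have hvy : (v - y).val = n - (y - v).val := by
      have h1 : v - y = (0 : ZMod n) - (y - v) := by ring
      rw [h1, val_sub', ZMod.val_zero]
      rw [Nat.mod_eq_of_lt (by omega)]
      omega
    have hdx0 : (x - v).val = 0 := by
      by_contra hdx
      exact hni ⟨by rw [hvy]; omega, by rw [hvy, hxy']; omega⟩
    have hlift : liftv n v s(x, y) = ((y - v).val, n) := by
      rw [liftv_mk, hmin, hmax, if_neg (by omega)]
    refine ⟨(y - v).val, n, hlift, by omega, le_refl n, by omega, ?_, ?_, ?_⟩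
    · have hxv' : x = v := by rw [hxv, hdx0]; simp
      have h2 : v + ((n : ℕ) : ZMod n) = x := by
        rw [hxv', ZMod.natCast_self, add_zero]
      rw [← hyv, h2]
      exact Sym2.eq_swap
    · simp only [IsDiameter, chordLen_mk, hyx, hxy']
      omega
    · intro hlt i' hi'
      have hcovy : ((v + (i' : ZMod n)) - y).val = (i' + n - (y - v).val) % n := by
        have h1 : (v + (i' : ZMod n)) - y = ((i' : ℕ) : ZMod n) - (y - v) := by ring
        rw [h1, val_sub', ZMod.val_natCast, Nat.mod_eq_of_lt hi']
      constructor
      · rintro ⟨h1, h2⟩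
        refine ⟨y, x, Sym2.eq_swap, hstrict0, ?_⟩
        rw [hcovy, hxy']
        have h3 : i' + n - (y - v).val = (i' - (y - v).val) + n := by omega
        rw [h3, Nat.add_mod_right, Nat.mod_eq_of_lt (by omega)]
        omega
      · rintro ⟨x', y', heq, hstrict, hc⟩
        obtain ⟨e1, e2⟩ := orient_unique (Sym2.eq_swap.trans heq : s(y, x) = s(x', y'))
          hstrict0 hstrict.le
        rw [e1, e2] at hc
        rw [hcovy, hxy'] at hc
        rcases le_or_gt ((y - v).val) i' with h | h
        · exact ⟨h, hi'⟩
        · rw [Nat.mod_eq_of_lt (by omega)] at hc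
          omega

lemma liftv_spec (hn : 7 ≤ n) (v : ZMod n) (p : Sym2 (ZMod n))
    (hl2 : 2 ≤ chordLen p) (hG : Good v p) :
    ∃ a b : ℕ, liftv n v p = (a, b) ∧ a + 2 ≤ b ∧ b ≤ n ∧ 2 * (b - a) ≤ n ∧
      p = s(v + (a : ZMod n), v + (b : ZMod n)) ∧
      (IsDiameter p ↔ 2 * (b - a) = n) ∧
      (2 * (b - a) < n → ∀ i' : ℕ, i' < n →
        ((a ≤ i' ∧ i' < b) ↔ LayersEdge p (v + (i' : ZMod n)))) := by
  obtain ⟨x, y, rfl⟩ := sym2_exists p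
  have hxyne : x ≠ y := by
    intro h; rw [h, chordLen_mk] at hl2; simp at hl2
  have hvne : (x - v).val ≠ (y - v).val := by
    intro h
    have h1 : x - v = y - v := ZMod.val_injective n h
    apply hxyne
    have h2 := congrArg (· + v) h1
    simpa using h2
  have hsw : s(x, y) = s(y, x) := Sym2.eq_swap
  rcases Nat.lt_or_ge ((x - v).val) ((y - v).val) with h | h
  · exact liftv_spec_aux hn v x y h hl2 hG
  · have h' : (y - v).val < (x - v).val := by omega
    have hres := liftv_spec_aux hn v y x h' (by rw [← hsw]; exact hl2)
      (by rw [← hsw]; exact hG)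
    rw [hsw]
    exact hres

end ZModFacts2


end LayerBound

/-- For `k ≥ 1`, if `T` is a triangulation of the `n`-gon such that every
boundary edge has doubled layer number at most `2k` (layer number at most `k`), then
`n ≤ 3·2^k`. -/
theorem order_le_of_layer_bound (k n : ℕ) (hk : 1 ≤ k) (T : Finset (Sym2 (ZMod n)))
    (hT : IsTriangulation n T) (hm : ∀ i : ZMod n, mT n T i ≤ 2 * k) :
    n ≤ 3 * 2 ^ k := by
  rcases le_or_gt n 6 with h6 | h6
  · have h2 : 2 ≤ 2 ^ k := by
      calc (2 : ℕ) = 2 ^ 1 := (pow_one 2).symm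
        _ ≤ 2 ^ k := Nat.pow_le_pow_right (by norm_num) hk
    omega
  have hn7 : 7 ≤ n := h6
  haveI : NeZero n := ⟨by omega⟩
  obtain ⟨v, hGood⟩ := LayerBound.exists_goodv hn7 T hT
  classical
  have hspec := fun p (hp : p ∈ T) =>
    LayerBound.liftv_spec hn7 v p (hT.2.1 p hp) (hGood p hp)
  have hinj : Set.InjOn (LayerBound.liftv n v) T := by
    intro p hp q hq he
    obtain ⟨a, b, hl1, _, _, _, hp1, _, _⟩ := hspec p hp
    obtain ⟨c, d, hl2, _, _, _, hq1, _, _⟩ := hspec q hq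
    rw [hl1, hl2] at he
    injection he with e1 e2
    subst e1; subst e2
    rw [hp1, hq1]
  set S := T.image (LayerBound.liftv n v) with hS
  have hcard : S.card = n - 3 := by
    rw [hS, Finset.card_image_of_injOn hinj, hT.1]
  have hlenS : LayerBound.IsLen S := by
    intro P hP
    obtain ⟨p, hp, hPe⟩ := Finset.mem_image.mp hP
    obtain ⟨a, b, hl1, h2, _, _, _, _, _⟩ := hspec p hp
    rw [← hPe, hl1]
    exact h2
  have hwinS : ∀ P ∈ S, 0 ≤ P.1 ∧ P.2 ≤ 0 + n := by
    intro P hP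
    obtain ⟨p, hp, hPe⟩ := Finset.mem_image.mp hP
    obtain ⟨a, b, hl1, _, h3, _, _, _, _⟩ := hspec p hp
    rw [← hPe, hl1]
    exact ⟨Nat.zero_le _, by omega⟩
  have hncS : LayerBound.IsNC S := by
    intro P hP Q hQ hint
    obtain ⟨p, hp, hPe⟩ := Finset.mem_image.mp hP
    obtain ⟨q, hq, hQe⟩ := Finset.mem_image.mp hQ
    obtain ⟨a, b, hl1, hab2, hbn, habn, hpeq, _, _⟩ := hspec p hp
    obtain ⟨c, d, hl2, hcd2, hdn, hcdn, hqeq, _, _⟩ := hspec q hq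
    rw [← hPe, hl1, ← hQe, hl2] at hint
    dsimp only at hint
    obtain ⟨h1, h2, h3⟩ := hint
    by_cases hdan : d = n ∧ a = 0
    · obtain ⟨hd, ha⟩ := hdan
      omega
    · have hda : d - a < n := by
        rcases Nat.lt_or_ge (d - a) n with h | h
        · exact h
        · exact absurd ⟨by omega, by omega⟩ hdan
      have hval : ∀ a' b' : ℕ, a' ≤ b' →
          ((v + (b' : ZMod n)) - (v + (a' : ZMod n))).val = (b' - a') % n := by
        intro a' b' hab
        have e : (v + (b' : ZMod n)) - (v + (a' : ZMod n)) = ((b' - a' : ℕ) : ZMod n) := by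
          rw [Nat.cast_sub hab]; push_cast; ring
        rw [e, ZMod.val_natCast]
      have hv1 : ((v + (c : ZMod n)) - (v + (a : ZMod n))).val = c - a := by
        rw [hval a c (by omega), Nat.mod_eq_of_lt (by omega)]
      have hv2 : ((v + (b : ZMod n)) - (v + (a : ZMod n))).val = b - a := by
        rw [hval a b (by omega), Nat.mod_eq_of_lt (by omega)]
      have hv3 : ((v + (d : ZMod n)) - (v + (a : ZMod n))).val = d - a := by
        rw [hval a d (by omega), Nat.mod_eq_of_lt (by omega)]
      have hcr := LayerBound.crosses_of_vals
        (x := v + (a : ZMod n)) (y := v + (b : ZMod n))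
        (z := v + (c : ZMod n)) (w := v + (d : ZMod n))
        (by rw [hv1]; omega) (by rw [hv1, hv2]; omega)
        (by rw [hv3, hv2]; omega) (by rw [hv3]; omega)
        (by rw [hv3, hv2]; omega) (by rw [hv1, hv3]; omega)
      have hpq : p ≠ q := by
        intro h
        rw [h, hl2] at hl1
        injection hl1 with e1 e2
        omega
      exact hT.2.2 p hp q hq hpq (by rw [hpeq, hqeq]; exact hcr)
  have hdiam := LayerBound.diam_unique hn7 T hT
  have hcov : ∀ i, 0 ≤ i → i < 0 + n →
      (S.filter (fun P => P.1 ≤ i ∧ i < P.2)).card ≤ k := by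
    intro i _ hi
    rw [zero_add] at hi
    have hcard2 : (S.filter (fun P => P.1 ≤ i ∧ i < P.2)).card =
        (T.filter (fun p =>
          (LayerBound.liftv n v p).1 ≤ i ∧ i < (LayerBound.liftv n v p).2)).card := by
      rw [hS, Finset.filter_image]
      apply Finset.card_image_of_injOn
      exact hinj.mono (Finset.coe_subset.mpr (Finset.filter_subset _ _))
    have hmt := hm (v + (i : ZMod n))
    unfold mT at hmt
    have hY1 : (T.filter (fun p => IsDiameter p)).card ≤ 1 := by
      rw [Finset.card_le_one]
      intro p hp q hq
      exact hdiam p (Finset.mem_filter.mp hp).1 q (Finset.mem_filter.mp hq).1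
        (Finset.mem_filter.mp hp).2 (Finset.mem_filter.mp hq).2
    have hsub : T.filter (fun p =>
          (LayerBound.liftv n v p).1 ≤ i ∧ i < (LayerBound.liftv n v p).2) ⊆
        T.filter (fun p => LayersEdge p (v + (i : ZMod n)) ∧ ¬ IsDiameter p) ∪
          T.filter (fun p => IsDiameter p) := by
      intro p hp
      obtain ⟨hpT, hc⟩ := Finset.mem_filter.mp hp
      by_cases hd : IsDiameter p
      · exact Finset.mem_union_right _ (Finset.mem_filter.mpr ⟨hpT, hd⟩)
      · apply Finset.mem_union_left
        obtain ⟨a, b, hl1, hab2, hbn, habn, hpeq, hdi, hlay⟩ := hspec p hpT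
        rw [hl1] at hc
        have hne2 : 2 * (b - a) ≠ n := fun h => hd (hdi.mpr h)
        exact Finset.mem_filter.mpr
          ⟨hpT, (hlay (by omega) i hi).mp ⟨hc.1, hc.2⟩, hd⟩
    have hle := Finset.card_le_card hsub
    have hle2 := Finset.card_union_le
      (T.filter (fun p => LayersEdge p (v + (i : ZMod n)) ∧ ¬ IsDiameter p))
      (T.filter (fun p => IsDiameter p))
    omega
  have hkey := LayerBound.key S.card S 0 n k 1 (le_refl _) hlenS hncS hwinS hcov (by omega)
  calc n ≤ (1 + 2) * 2 ^ k := hkey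
    _ = 3 * 2 ^ k := by norm_num
end

section
/- For every k ≥ 1 there exists a triangulation T of the n-gon with n = 3·2^k that contains no diameter and in which every boundary edge is layered by at most k chords, i.e., m_T(e) ≤ 2k for every boundary edge e. Hence 3·2^k is the largest order of a triangulation in which every boundary edge has layer number at most k. -/
open scoped Classical

/-!
Upper bound. The edges layered by a chord that is not a diameter form an arc of the boundary
whose size is the length of the chord, and the arcs of two non-crossing chords are nested or
disjoint. So the non-diameters of a triangulation give a laminar family of `n - 3 - D` sets of
size `≥ 2` on the `n` edges, where `D ≤ 1` is the number of diameters (two diameters cross), and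
the depth of an edge in this family is its layer number. For such a family the Kraft-type
inequality `∑ₑ 2^(-depth e) ≤ n - #family` holds: split the family at a maximal member `M`; the
members strictly inside `M` are at most `#M - 2` many, because a laminar family of sets of size
`≥ 2` on `m` points has fewer than `m` members. If every doubled layer number is at most
`2k`, every depth is at most `k - D`, hence `n · 2^(D-k) ≤ 3 + D` and `n ≤ 3 · 2^k`.

Lower bound. In the `3·2^k`-gon take, for `1 ≤ s ≤ k`, the chords joining consecutive multiples
of `2^s`. They have length `2^s < n / 2`, they are pairwise nested or disjoint as dyadic
intervals, there are `3·2^k - 3` of them, and each edge is layered by one chord on each level.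
-/

section Laminar
variable {α : Type*}

def IsLaminar (G : Finset (Finset α)) : Prop :=
  ∀ A ∈ G, ∀ B ∈ G, A ⊆ B ∨ B ⊆ A ∨ Disjoint A B

lemma IsLaminar.mono {G H : Finset (Finset α)} (hG : IsLaminar G) (h : H ⊆ G) : IsLaminar H :=
  fun A hA B hB => hG A (h hA) B (h hB)

variable [DecidableEq α]

def depth (G : Finset (Finset α)) (e : α) : ℕ := (G.filter (e ∈ ·)).card

lemma depth_mono {G H : Finset (Finset α)} (h : H ⊆ G) (e : α) : depth H e ≤ depth G e :=
  Finset.card_le_card (Finset.filter_subset_filter _ h)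

lemma depth_add_one_le {G H : Finset (Finset α)} (h : H ⊆ G) {M : Finset α} (hM : M ∈ G)
    (hMH : M ∉ H) {e : α} (he : e ∈ M) : depth H e + 1 ≤ depth G e := by
  rw [depth, depth, ← Finset.card_insert_of_notMem fun h' => hMH (Finset.filter_subset _ _ h')]
  exact Finset.card_le_card
    (Finset.insert_subset (Finset.mem_filter.mpr ⟨hM, he⟩) (Finset.filter_subset_filter _ h))

namespace IsLaminar
variable {G : Finset (Finset α)}

lemma subset_insert_of_maximal (hG : IsLaminar G) {M : Finset α} (hM : Maximal (· ∈ G) M) :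
    G ⊆ insert M (G.filter (· ⊂ M) ∪ G.filter (Disjoint · M)) := by
  intro B hB
  simp only [Finset.mem_insert, Finset.mem_union, Finset.mem_filter]
  rcases hG B hB M hM.1 with h | h | h
  · rcases h.eq_or_ssubset with rfl | h
    exacts [.inl rfl, .inr (.inl ⟨hB, h⟩)]
  · exact .inl ((hM.2 hB h).antisymm h)
  · exact .inr (.inr ⟨hB, h⟩)

theorem card_lt (hG : IsLaminar G) (hc : ∀ A ∈ G, 2 ≤ A.card) {E : Finset α}
    (hE : ∀ A ∈ G, A ⊆ E) (hne : E.Nonempty) : G.card < E.card := by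
  induction E using Finset.strongInduction generalizing G with | H E ih => ?_
  rcases (G.erase E).eq_empty_or_nonempty with h0 | hne'
  · have : G ⊆ {E} := fun A hA => by
      by_contra h
      simpa [h0] using Finset.mem_erase.mpr ⟨Finset.mem_singleton.not.mp h, hA⟩
    rcases Finset.subset_singleton_iff.mp this with rfl | rfl
    · exact Finset.card_pos.mpr hne
    · rw [Finset.card_singleton]
      exact hc E (Finset.mem_singleton_self E)
  obtain ⟨M, hM⟩ := (G.erase E).exists_maximal hne'
  obtain ⟨hME, hMG⟩ := Finset.mem_erase.mp hM.1
  have hM₀ : M.Nonempty := Finset.card_pos.mp (by have := hc M hMG; omega)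
  set Gin := (G.erase E).filter (· ⊂ M)
  set Gout := (G.erase E).filter (Disjoint · M)
  have hsub : G.erase E ⊆ insert M (Gin ∪ Gout) :=
    (hG.mono (G.erase_subset E)).subset_insert_of_maximal hM
  have hGin : ∀ A ∈ insert M Gin, A ∈ G ∧ A ⊆ M := by
    simp only [Gin, Finset.mem_insert, Finset.mem_filter, Finset.mem_erase]
    rintro A (rfl | ⟨⟨-, hA⟩, hAM⟩)
    exacts [⟨hMG, subset_rfl⟩, ⟨hA, hAM.subset⟩]
  have hGout : ∀ A ∈ Gout, A ∈ G ∧ A ⊆ E \ M := by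
    simp only [Gout, Finset.mem_filter, Finset.mem_erase]
    rintro A ⟨⟨-, hA⟩, hAM⟩
    exact ⟨hA, Finset.subset_sdiff.mpr ⟨hE A hA, hAM⟩⟩
  have hMsub : M ⊂ E := ssubset_of_subset_of_ne (hE M hMG) hME
  have hin := ih M hMsub (hG.mono fun A hA => (hGin A hA).1) (fun A hA => hc A (hGin A hA).1)
    (fun A hA => (hGin A hA).2) hM₀
  have hout := ih (E \ M) (Finset.sdiff_ssubset hMsub.subset hM₀)
    (hG.mono fun A hA => (hGout A hA).1) (fun A hA => hc A (hGout A hA).1)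
    (fun A hA => (hGout A hA).2) (Finset.sdiff_nonempty.mpr hMsub.not_subset)
  rw [Finset.card_insert_of_notMem fun h => (Finset.mem_filter.mp h).2.ne rfl] at hin
  rw [Finset.card_sdiff_of_subset hMsub.subset] at hout
  have := Finset.card_le_card hsub
  have := Finset.card_insert_le M (Gin ∪ Gout)
  have := Finset.card_union_le Gin Gout
  have := Finset.pred_card_le_card_erase (s := G) (a := E)
  have := Finset.card_le_card hMsub.subset
  omega

theorem card_filter_ssubset_add_two_le (hG : IsLaminar G) (hc : ∀ A ∈ G, 2 ≤ A.card)
    {M : Finset α} (hM : M ∈ G) : (G.filter (· ⊂ M)).card + 2 ≤ M.card := by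
  have hsub : insert M (G.filter (· ⊂ M)) ⊆ G := Finset.insert_subset hM (Finset.filter_subset _ G)
  have hle : ∀ A ∈ insert M (G.filter (· ⊂ M)), A ⊆ M := by
    simp only [Finset.mem_insert, Finset.mem_filter]
    rintro A (rfl | ⟨-, hA⟩)
    exacts [subset_rfl, hA.subset]
  have := (hG.mono hsub).card_lt (fun A hA => hc A (hsub hA)) hle
    (Finset.card_pos.mp (by have := hc M hM; omega))
  rw [Finset.card_insert_of_notMem fun h => (Finset.mem_filter.mp h).2.ne rfl] at this
  omega

theorem sum_inv_two_pow_depth_le (hG : IsLaminar G) (hc : ∀ A ∈ G, 2 ≤ A.card) {E : Finset α}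
    (hE : ∀ A ∈ G, A ⊆ E) : ∑ e ∈ E, (2⁻¹ : ℚ) ^ depth G e ≤ E.card - G.card := by
  induction G using Finset.strongInduction generalizing E with | H G ih => ?_
  rcases G.eq_empty_or_nonempty with rfl | hne
  · simp [depth]
  obtain ⟨M, hM⟩ := G.exists_maximal hne
  have hMG : M ∈ G := hM.1
  have hM₀ : M.Nonempty := Finset.card_pos.mp (by have := hc M hMG; omega)
  set Gin := G.filter (· ⊂ M)
  set Gout := G.filter (Disjoint · M)
  have hMin : M ∉ Gin := fun h => (Finset.mem_filter.mp h).2.ne rfl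
  have hMout : M ∉ Gout := fun h => hM₀.ne_empty (disjoint_self.mp (Finset.mem_filter.mp h).2)
  have hcard : G.card ≤ Gin.card + Gout.card + 1 :=
    (Finset.card_le_card (hG.subset_insert_of_maximal hM)).trans
      ((Finset.card_insert_le _ _).trans (by grind [Finset.card_union_le]))
  have hinM : (Gin.card : ℚ) + 2 ≤ M.card := by
    exact_mod_cast hG.card_filter_ssubset_add_two_le hc hMG
  have ihin := ih Gin (Finset.filter_ssubset.mpr ⟨M, hMG, (·.ne rfl)⟩)
    (hG.mono (Finset.filter_subset _ G)) (fun A hA => hc A (Finset.filter_subset _ G hA))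
    (E := M) fun A hA => (Finset.mem_filter.mp hA).2.subset
  have ihout := ih Gout
    (Finset.filter_ssubset.mpr ⟨M, hMG, fun h => hMout (Finset.mem_filter.mpr ⟨hMG, h⟩)⟩)
    (hG.mono (Finset.filter_subset _ G)) (fun A hA => hc A (Finset.filter_subset _ G hA))
    (E := E \ M) fun A hA => Finset.subset_sdiff.mpr
      ⟨hE A (Finset.filter_subset _ G hA), (Finset.mem_filter.mp hA).2⟩
  have hsum_in : ∑ e ∈ M, (2⁻¹ : ℚ) ^ depth G e ≤ 2⁻¹ * ∑ e ∈ M, (2⁻¹ : ℚ) ^ depth Gin e := by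
    rw [Finset.mul_sum]
    refine Finset.sum_le_sum fun e he => ?_
    rw [← pow_succ']
    exact pow_le_pow_of_le_one (by norm_num) (by norm_num)
      (depth_add_one_le (Finset.filter_subset _ G) hMG hMin he)
  have hsum_out : ∑ e ∈ E \ M, (2⁻¹ : ℚ) ^ depth G e ≤ ∑ e ∈ E \ M, (2⁻¹ : ℚ) ^ depth Gout e :=
    Finset.sum_le_sum fun e _ => pow_le_pow_of_le_one (by norm_num) (by norm_num)
      (depth_mono (Finset.filter_subset _ G) e)
  have hEM : ((E \ M).card : ℚ) = E.card - M.card := by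
    rw [Finset.card_sdiff_of_subset (hE M hMG), Nat.cast_sub (Finset.card_le_card (hE M hMG))]
  have hcard' : (G.card : ℚ) ≤ Gin.card + Gout.card + 1 := by exact_mod_cast hcard
  rw [← Finset.sum_sdiff (hE M hMG)]
  linarith

theorem card_le_mul_two_pow [Fintype α] (hG : IsLaminar G) (hc : ∀ A ∈ G, 2 ≤ A.card) {d : ℕ}
    (hd : ∀ e, depth G e ≤ d) : (Fintype.card α : ℚ) ≤ (Fintype.card α - G.card) * 2 ^ d := by
  have hsum := hG.sum_inv_two_pow_depth_le hc fun A _ => Finset.subset_univ A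
  have hlow := Finset.card_nsmul_le_sum Finset.univ (fun e => (2⁻¹ : ℚ) ^ depth G e) (2⁻¹ ^ d)
    fun e _ => pow_le_pow_of_le_one (by norm_num) (by norm_num) (hd e)
  rw [Finset.card_univ] at hsum hlow
  rw [nsmul_eq_mul] at hlow
  have := hlow.trans hsum
  rwa [inv_pow, ← div_eq_mul_inv, div_le_iff₀ (by positivity)] at this

end IsLaminar
end Laminar

namespace ZMod

theorem val_natCast_of_le {n x : ℕ} (hx : x ≤ n) :
    (x : ZMod n).val = x ∨ x = n ∧ (x : ZMod n).val = 0 := by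
  rcases hx.lt_or_eq with h | rfl
  · exact .inl (val_cast_of_lt h)
  · exact .inr ⟨rfl, by simp⟩

variable {n : ℕ} [NeZero n]

theorem val_sub_add_val_sub (x y z : ZMod n) :
    (x - y).val + (y - z).val = (x - z).val ∨ (x - y).val + (y - z).val = (x - z).val + n := by
  have h : x - y + (y - z) = x - z := sub_add_sub_cancel x y z
  rcases lt_or_ge ((x - y).val + (y - z).val) n with hlt | hge
  · exact .inl (h ▸ (val_add_of_lt hlt).symm)
  · exact .inr (h ▸ val_add_val_of_le hge)

theorem val_sub_eq_val_sub_iff {a x y : ZMod n} : (x - a).val = (y - a).val ↔ x = y := by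
  rw [(val_injective n).eq_iff, sub_left_inj]

theorem val_sub_add_val_sub_swap (x y : ZMod n) :
    (x - y).val + (y - x).val = 0 ∨ (x - y).val + (y - x).val = n := by
  simpa using val_sub_add_val_sub x y x

theorem val_sub_add_val_sub_self {x y : ZMod n} (h : x ≠ y) : (x - y).val + (y - x).val = n := by
  have h₁ := val_sub_add_val_sub_swap x y
  have h₂ : (x - y).val ≠ 0 := by rwa [Ne, val_eq_zero, sub_eq_zero]
  omega

end ZMod

section Crossing
variable {n : ℕ} [NeZero n]

lemma inArc_swap {a b x : ZMod n} (hab : a ≠ b) (hxa : x ≠ a) (hxb : x ≠ b) :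
    InArc b a x ↔ ¬ InArc a b x := by
  have h₁ := ZMod.val_sub_add_val_sub x a b
  have h₂ := ZMod.val_sub_add_val_sub_self hab
  have h₃ : (x - a).val ≠ 0 := by rwa [Ne, ZMod.val_eq_zero, sub_eq_zero]
  have h₄ : (x - a).val ≠ (b - a).val := mt ZMod.val_sub_eq_val_sub_iff.mp hxb
  have := (x - a).val_lt
  have := (x - b).val_lt
  unfold InArc
  omega

lemma crosses_mk_iff {a b c d : ZMod n} :
    Crosses s(a, b) s(c, d) ↔
      (a ≠ b ∧ a ≠ c ∧ a ≠ d ∧ b ≠ c ∧ b ≠ d ∧ c ≠ d) ∧ Xor (InArc a b c) (InArc a b d) := by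
  refine ⟨?_, fun ⟨⟨hab, hac, had, hbc, hbd, hcd⟩, hx⟩ =>
    ⟨a, b, c, d, rfl, rfl, hab, hac, had, hbc, hbd, hcd, hx⟩⟩
  rintro ⟨a', b', c', d', hp, hq, hab, hac, had, hbc, hbd, hcd, hx⟩
  replace hx : Xor _ _ := hx
  rw [Sym2.eq_iff] at hp hq
  rcases hp with ⟨rfl, rfl⟩ | ⟨rfl, rfl⟩ <;> rcases hq with ⟨rfl, rfl⟩ | ⟨rfl, rfl⟩
  · exact ⟨⟨hab, hac, had, hbc, hbd, hcd⟩, hx⟩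
  · exact ⟨⟨hab, had, hac, hbd, hbc, hcd.symm⟩, xor_comm _ _ ▸ hx⟩
  · rw [inArc_swap hab.symm hbc.symm hac.symm, inArc_swap hab.symm hbd.symm had.symm,
      xor_not_not] at hx
    exact ⟨⟨hab.symm, hbc, hbd, hac, had, hcd⟩, hx⟩
  · rw [inArc_swap hab.symm hbd.symm had.symm, inArc_swap hab.symm hbc.symm hac.symm,
      xor_not_not, xor_comm] at hx
    exact ⟨⟨hab.symm, hbd, hbc, had, hac, hcd.symm⟩, hx⟩

lemma crosses_of_val_sub_lt {a b c d : ZMod n} (h₀ : 0 < (c - a).val)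
    (h₁ : (c - a).val < (b - a).val) (h₂ : (b - a).val < (d - a).val) :
    Crosses s(a, b) s(c, d) := by
  have ne_of : ∀ x y : ZMod n, (x - a).val ≠ (y - a).val → x ≠ y := fun x y h e => h (e ▸ rfl)
  have ha : (a - a).val = 0 := by simp
  refine crosses_mk_iff.mpr ⟨⟨ne_of _ _ ?_, ne_of _ _ ?_, ne_of _ _ ?_, ne_of _ _ ?_,
    ne_of _ _ ?_, ne_of _ _ ?_⟩, .inl ⟨⟨h₀, h₁⟩, fun h => lt_asymm h.2 h₂⟩⟩ <;> omega

lemma crosses_of_isDiameter {p q : Sym2 (ZMod n)} (hp : IsDiameter p) (hq : IsDiameter q)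
    (hpq : p ≠ q) : Crosses p q := by
  induction p with | _ a b => ?_
  induction q with | _ c d => ?_
  have hab := ZMod.val_sub_add_val_sub_swap b a
  have hcd := ZMod.val_sub_add_val_sub_swap d c
  -- seen from `a`, the vertex `b` is at `n / 2` and `d` is at `c ± n / 2`
  have hγδ := ZMod.val_sub_add_val_sub d c a
  have h₁ : ¬ ((c - a).val = (a - a).val ∧ (d - a).val = (b - a).val) := fun ⟨h, h'⟩ => by
    rw [ZMod.val_sub_eq_val_sub_iff] at h h'
    exact hpq (by rw [h, h'])
  have h₂ : ¬ ((c - a).val = (b - a).val ∧ (d - a).val = (a - a).val) := fun ⟨h, h'⟩ => by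
    rw [ZMod.val_sub_eq_val_sub_iff] at h h'
    exact hpq (by rw [h, h', Sym2.eq_swap])
  rw [sub_self, ZMod.val_zero] at h₁ h₂
  have := NeZero.pos n
  have := (c - a).val_lt
  have := (d - a).val_lt
  unfold IsDiameter chordLen cycDist at hp hq
  simp only [Sym2.lift_mk] at hp hq
  rcases (by omega : (0 < (c - a).val ∧ (c - a).val < (b - a).val ∧ (b - a).val < (d - a).val) ∨
      (0 < (d - a).val ∧ (d - a).val < (b - a).val ∧ (b - a).val < (c - a).val))
    with ⟨h₀, h₁, h₂⟩ | ⟨h₀, h₁, h₂⟩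
  · exact crosses_of_val_sub_lt h₀ h₁ h₂
  · rw [Sym2.eq_swap (a := c)]
    exact crosses_of_val_sub_lt h₀ h₁ h₂

end Crossing

section Arcs
variable {n : ℕ} [NeZero n]

/-- The `ℓ` boundary edges clockwise from `a`, the edge `{i, i + 1}` being recorded by `i`. -/
def arc (a : ZMod n) (ℓ : ℕ) : Finset (ZMod n) := Finset.univ.filter fun i => (i - a).val < ℓ

@[simp] lemma mem_arc {a i : ZMod n} {ℓ : ℕ} : i ∈ arc a ℓ ↔ (i - a).val < ℓ := by simp [arc]

lemma card_arc (a : ZMod n) {ℓ : ℕ} (hℓ : ℓ ≤ n) : (arc a ℓ).card = ℓ := by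
  refine (Finset.card_nbij (fun i => (i - a).val) (fun i hi => by simpa using hi)
    (fun i _ j _ h => ZMod.val_sub_eq_val_sub_iff.mp h) fun t ht => ⟨a + t, ?_⟩).trans
    (Finset.card_range ℓ)
  have ht : t < ℓ := by simpa using ht
  have hval : ((a + t - a : ZMod n)).val = t := by
    rw [add_sub_cancel_left, ZMod.val_cast_of_lt (by omega)]
  exact ⟨mem_arc.mpr (by rwa [hval]), hval⟩

lemma arc_nested_or_disjoint {a b c d : ZMod n} (hlen : (b - a).val + (d - c).val < n)
    (h : ¬ Crosses s(a, b) s(c, d)) :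
    arc a (b - a).val ⊆ arc c (d - c).val ∨ arc c (d - c).val ⊆ arc a (b - a).val ∨
      Disjoint (arc a (b - a).val) (arc c (d - c).val) := by
  by_contra! hne
  obtain ⟨⟨i, hiA, hiB⟩, ⟨j, hjB, hjA⟩, hdisj⟩ :=
    And.imp Finset.not_subset.mp (And.imp_left Finset.not_subset.mp) hne
  obtain ⟨l, hlA, hlB⟩ := Finset.not_disjoint_iff.mp hdisj
  -- an edge of each arc missing the other and a common edge force `c`, `d` to interleave `a`, `b`
  simp only [mem_arc] at hiA hiB hjA hjB hlA hlB
  have := ZMod.val_sub_add_val_sub d c a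
  have := ZMod.val_sub_add_val_sub i c a
  have := ZMod.val_sub_add_val_sub j c a
  have := ZMod.val_sub_add_val_sub l c a
  have := (i - c).val_lt
  have := (j - c).val_lt
  have := (l - c).val_lt
  have := (c - a).val_lt
  have := (d - a).val_lt
  rcases (by omega : (0 < (c - a).val ∧ (c - a).val < (b - a).val ∧ (b - a).val < (d - a).val) ∨
      (0 < (d - a).val ∧ (d - a).val < (b - a).val ∧ (b - a).val < (c - a).val))
    with ⟨h₀, h₁, h₂⟩ | ⟨h₀, h₁, h₂⟩
  · exact h (crosses_of_val_sub_lt h₀ h₁ h₂)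
  · rw [Sym2.eq_swap (a := c)] at h
    exact h (crosses_of_val_sub_lt h₀ h₁ h₂)

end Arcs

section LayeredEdges
variable {n : ℕ} [NeZero n]

noncomputable def layeredEdges (p : Sym2 (ZMod n)) : Finset (ZMod n) :=
  Finset.univ.filter (LayersEdge p)

lemma layersEdge_mk_iff {a b : ZMod n} (h : 2 * (b - a).val < n) (i : ZMod n) :
    LayersEdge s(a, b) i ↔ (i - a).val < (b - a).val := by
  have := ZMod.val_sub_add_val_sub_swap a b
  constructor
  · rintro ⟨a', b', he, hlt, hi⟩
    rcases Sym2.eq_iff.mp he with ⟨rfl, rfl⟩ | ⟨rfl, rfl⟩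
    · exact hi
    · omega
  · exact fun hi => ⟨a, b, rfl, by omega, hi⟩

lemma chordLen_mk_of_two_mul_lt {a b : ZMod n} (h : 2 * (b - a).val < n) :
    chordLen s(a, b) = (b - a).val := by
  have := ZMod.val_sub_add_val_sub_swap a b
  show min (b - a).val (a - b).val = _
  omega

lemma exists_mk_of_not_isDiameter {p : Sym2 (ZMod n)} (hp : ¬ IsDiameter p) :
    ∃ a b, p = s(a, b) ∧ 2 * (b - a).val < n ∧ chordLen p = (b - a).val ∧
      layeredEdges p = arc a (b - a).val := by
  have short : ∀ x y : ZMod n, 2 * (y - x).val < n → ∃ a b, s(x, y) = s(a, b) ∧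
      2 * (b - a).val < n ∧ chordLen s(x, y) = (b - a).val ∧
      layeredEdges s(x, y) = arc a (b - a).val := fun x y h =>
    ⟨x, y, rfl, h, chordLen_mk_of_two_mul_lt h, by ext; simp [layeredEdges, layersEdge_mk_iff h]⟩
  induction p with | _ x y => ?_
  have := ZMod.val_sub_add_val_sub_swap x y
  have hp : 2 * min (y - x).val (x - y).val ≠ n := hp
  have := NeZero.ne n
  rcases le_total (y - x).val (x - y).val with hle | hle
  · exact short x y (by omega)
  · rw [Sym2.eq_swap]
    exact short y x (by omega)

lemma card_layeredEdges {p : Sym2 (ZMod n)} (hp : ¬ IsDiameter p) :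
    (layeredEdges p).card = chordLen p := by
  obtain ⟨a, b, -, h2, hlen, hE⟩ := exists_mk_of_not_isDiameter hp
  rw [hE, hlen, card_arc a (by omega)]

lemma eq_of_layeredEdges_eq {p q : Sym2 (ZMod n)} (hp : ¬ IsDiameter p) (hq : ¬ IsDiameter q)
    (hp₀ : 0 < chordLen p) (h : layeredEdges p = layeredEdges q) : p = q := by
  have hℓ : chordLen p = chordLen q := by rw [← card_layeredEdges hp, ← card_layeredEdges hq, h]
  obtain ⟨a, b, rfl, hab, hlp, hp'⟩ := exists_mk_of_not_isDiameter hp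
  obtain ⟨c, d, rfl, hcd, hlq, hq'⟩ := exists_mk_of_not_isDiameter hq
  rw [hp', hq'] at h
  have hac : a ∈ arc c (d - c).val := h ▸ mem_arc.mpr (by rw [sub_self, ZMod.val_zero]; omega)
  have hca : c ∈ arc a (b - a).val :=
    h.symm ▸ mem_arc.mpr (by rw [sub_self, ZMod.val_zero]; omega)
  rw [mem_arc] at hac hca
  have := ZMod.val_sub_add_val_sub_swap a c
  obtain rfl : c = a := ZMod.val_sub_eq_val_sub_iff.mp (by rw [sub_self, ZMod.val_zero]; omega)
  rw [ZMod.val_sub_eq_val_sub_iff.mp (hlp.symm.trans (hℓ.trans hlq))]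

lemma layeredEdges_nested_or_disjoint {p q : Sym2 (ZMod n)} (hp : ¬ IsDiameter p)
    (hq : ¬ IsDiameter q) (h : ¬ Crosses p q) :
    layeredEdges p ⊆ layeredEdges q ∨ layeredEdges q ⊆ layeredEdges p ∨
      Disjoint (layeredEdges p) (layeredEdges q) := by
  obtain ⟨a, b, rfl, hab, -, hp'⟩ := exists_mk_of_not_isDiameter hp
  obtain ⟨c, d, rfl, hcd, -, hq'⟩ := exists_mk_of_not_isDiameter hq
  rw [hp', hq']
  exact arc_nested_or_disjoint (by omega) h

lemma isLaminar_image_layeredEdges {T : Finset (Sym2 (ZMod n))} (hT : ∀ p ∈ T, ¬ IsDiameter p)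
    (hnc : ∀ p ∈ T, ∀ q ∈ T, p ≠ q → ¬ Crosses p q) : IsLaminar (T.image layeredEdges) := by
  simp only [IsLaminar, Finset.forall_mem_image]
  intro p hp q hq
  by_cases hpq : p = q
  · exact .inl (hpq ▸ subset_rfl)
  · exact layeredEdges_nested_or_disjoint (hT p hp) (hT q hq) (hnc p hp q hq hpq)

lemma depth_image_layeredEdges {T : Finset (Sym2 (ZMod n))}
    (hinj : Set.InjOn layeredEdges (T : Set (Sym2 (ZMod n)))) (i : ZMod n) :
    depth (T.image layeredEdges) i = (T.filter (LayersEdge · i)).card := by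
  rw [depth, Finset.filter_image,
    Finset.card_image_of_injOn (hinj.mono (Finset.filter_subset _ _))]
  congr 1
  exact Finset.filter_congr fun p _ => by simp [layeredEdges]

end LayeredEdges

lemma card_filter_isDiameter_le_one {n : ℕ} [NeZero n] {T : Finset (Sym2 (ZMod n))}
    (hnc : ∀ p ∈ T, ∀ q ∈ T, p ≠ q → ¬ Crosses p q) :
    (T.filter fun p => IsDiameter p).card ≤ 1 :=
  Finset.card_le_one.mpr fun p hp q hq => by_contra fun hpq =>
    hnc p (Finset.filter_subset _ _ hp) q (Finset.filter_subset _ _ hq) hpq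
      (crosses_of_isDiameter (Finset.mem_filter.mp hp).2 (Finset.mem_filter.mp hq).2 hpq)

lemma three_add_mul_two_pow_sub_le {D k : ℕ} (hD : D ≤ 1) (hDk : D ≤ k) :
    (3 + D) * 2 ^ (k - D) ≤ 3 * 2 ^ k := by
  rcases Nat.le_one_iff_eq_zero_or_eq_one.mp hD with rfl | rfl
  · simp
  · obtain ⟨k, rfl⟩ : ∃ k', k = k' + 1 := ⟨k - 1, by omega⟩
    rw [pow_succ, Nat.add_sub_cancel]
    omega

theorem le_three_mul_two_pow_of_mT_le {n k : ℕ} {T : Finset (Sym2 (ZMod n))}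
    (hT : IsTriangulation n T) (hm : ∀ i, mT n T i ≤ 2 * k) : n ≤ 3 * 2 ^ k := by
  rcases Nat.eq_zero_or_pos n with rfl | hn
  · exact Nat.zero_le _
  have : NeZero n := ⟨hn.ne'⟩
  obtain ⟨hcard, hlen, hnc⟩ := hT
  set Tn := T.filter (¬ IsDiameter ·)
  set D := (T.filter fun p => IsDiameter p).card
  have hTn : ∀ p ∈ Tn, p ∈ T ∧ ¬ IsDiameter p := fun p hp => Finset.mem_filter.mp hp
  have hD : D ≤ 1 := card_filter_isDiameter_le_one hnc
  have hinj : Set.InjOn layeredEdges (Tn : Set (Sym2 (ZMod n))) := fun p hp q hq h =>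
    eq_of_layeredEdges_eq (hTn p hp).2 (hTn q hq).2 (by have := hlen p (hTn p hp).1; omega) h
  have hG := isLaminar_image_layeredEdges (fun p hp => (hTn p hp).2)
    fun p hp q hq => hnc p (hTn p hp).1 q (hTn q hq).1
  have hGc : ∀ A ∈ Tn.image layeredEdges, 2 ≤ A.card := by
    simp only [Finset.forall_mem_image]
    intro p hp
    rw [card_layeredEdges (hTn p hp).2]
    exact hlen p (hTn p hp).1
  have hdepth : ∀ i, depth (Tn.image layeredEdges) i + D ≤ k := fun i => by
    have hfilter : T.filter (fun p => LayersEdge p i ∧ ¬ IsDiameter p) =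
        Tn.filter (LayersEdge · i) := by
      rw [Finset.filter_filter]
      exact Finset.filter_congr fun p _ => and_comm
    have := hm i
    rw [mT, hfilter, ← depth_image_layeredEdges hinj] at this
    omega
  have key := hG.card_le_mul_two_pow hGc (d := k - D) fun i => by have := hdepth i; omega
  rw [ZMod.card, Finset.card_image_of_injOn hinj] at key
  have hTcard : (n : ℚ) - Tn.card ≤ 3 + D := by
    have : D + Tn.card = T.card := Finset.card_filter_add_card_filter_not _
    have : (n : ℚ) ≤ Tn.card + D + 3 := by exact_mod_cast (by omega : n ≤ Tn.card + D + 3)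
    linarith
  have hq : (n : ℚ) ≤ (3 + D) * 2 ^ (k - D) :=
    key.trans (mul_le_mul_of_nonneg_right hTcard (by positivity))
  have hnat : n ≤ (3 + D) * 2 ^ (k - D) := by exact_mod_cast hq
  exact hnat.trans (three_add_mul_two_pow_sub_le hD (by have := hdepth 0; omega))

-- Chords `{x, y}` with `x < y ≤ n` in `ℕ`; the endpoint `y = n` is the vertex `0`.
section NatChords

lemma val_natCast_sub_natCast {n x y : ℕ} (hxy : x ≤ y) (hyx : y < x + n) :
    ((y : ZMod n) - x).val = y - x := by
  rw [← Nat.cast_sub hxy, ZMod.val_cast_of_lt (by omega)]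

lemma eq_of_mk_natCast_eq {n x y x' y' : ℕ} (hxy : x < y) (hy : y ≤ n) (h2 : 2 * (y - x) < n)
    (hxy' : x' < y') (hy' : y' ≤ n) (h2' : 2 * (y' - x') < n)
    (h : s((x : ZMod n), y) = s((x' : ZMod n), y')) : x = x' ∧ y = y' := by
  have := ZMod.val_cast_of_lt (n := n) (by omega : x < n)
  have := ZMod.val_cast_of_lt (n := n) (by omega : x' < n)
  have := ZMod.val_natCast_of_le (n := n) hy
  have := ZMod.val_natCast_of_le (n := n) hy'
  rcases Sym2.eq_iff.mp h with ⟨h₁, h₂⟩ | ⟨h₁, h₂⟩ <;>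
    have := congrArg ZMod.val h₁ <;> have := congrArg ZMod.val h₂ <;> omega

variable {n : ℕ} [NeZero n]

lemma inArc_natCast_iff {x y z : ℕ} (hxy : x < y) (hy : y ≤ n) (hyx : y < x + n) (hz : z ≤ n) :
    InArc (x : ZMod n) y z ↔ x < z ∧ z < y := by
  have h := ZMod.val_sub_add_val_sub (z : ZMod n) x 0
  simp only [sub_zero] at h
  have := ZMod.val_cast_of_lt (n := n) (by omega : x < n)
  have := ZMod.val_natCast_of_le (n := n) hz
  have := ((z : ZMod n) - x).val_lt
  unfold InArc
  rw [val_natCast_sub_natCast hxy.le hyx]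
  omega

lemma layersEdge_natCast_iff {x y : ℕ} (hxy : x < y) (hy : y ≤ n) (h2 : 2 * (y - x) < n)
    (i : ZMod n) :
    LayersEdge s((x : ZMod n), y) i ↔ x ≤ i.val ∧ i.val < y := by
  have hval := val_natCast_sub_natCast (n := n) hxy.le (by omega)
  rw [layersEdge_mk_iff (a := (x : ZMod n)) (b := y) (by omega), hval]
  have h := ZMod.val_sub_add_val_sub i x 0
  simp only [sub_zero] at h
  have := ZMod.val_cast_of_lt (n := n) (by omega : x < n)
  have := i.val_lt
  have := (i - x).val_lt
  omega

lemma chordLen_natCast {x y : ℕ} (hxy : x < y) (h2 : 2 * (y - x) < n) :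
    chordLen s((x : ZMod n), y) = y - x := by
  have hval := val_natCast_sub_natCast (n := n) hxy.le (by omega)
  rw [chordLen_mk_of_two_mul_lt (by omega), hval]

lemma interleave_of_crosses_natCast {x y x' y' : ℕ} (hxy : x < y) (hy : y ≤ n) (hyx : y < x + n)
    (hxy' : x' < y') (hy' : y' ≤ n) (h : Crosses s((x : ZMod n), y) s((x' : ZMod n), y')) :
    x < x' ∧ x' < y ∧ y < y' ∨ x' < x ∧ x < y' ∧ y' < y := by
  obtain ⟨⟨-, hxx', -, -, hyy', -⟩, hx⟩ := crosses_mk_iff.mp h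
  rw [inArc_natCast_iff hxy hy hyx (by omega), inArc_natCast_iff hxy hy hyx hy'] at hx
  have : x ≠ x' := fun e => hxx' (e ▸ rfl)
  have : y ≠ y' := fun e => hyy' (e ▸ rfl)
  unfold Xor at hx
  omega

end NatChords

lemma not_mul_lt_lt_succ_mul {u z j : ℕ} (hz : u ∣ z) (h₁ : j * u < z) (h₂ : z < (j + 1) * u) :
    False := by
  obtain ⟨m, rfl⟩ := hz
  have := Nat.lt_of_mul_lt_mul_left (a := u) (by linarith : u * j < u * m)
  have := Nat.lt_of_mul_lt_mul_left (a := u) (by linarith : u * m < u * (j + 1))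
  omega

lemma not_dyadic_interleave {s s' j j' : ℕ} (h₁ : j * 2 ^ s < j' * 2 ^ s')
    (h₂ : j' * 2 ^ s' < (j + 1) * 2 ^ s) (h₃ : (j + 1) * 2 ^ s < (j' + 1) * 2 ^ s') : False := by
  -- the endpoints of the longer chord are multiples of the length of the shorter one
  rcases le_total s s' with hs | hs
  · exact not_mul_lt_lt_succ_mul (Dvd.dvd.mul_left (pow_dvd_pow 2 hs) j') h₁ h₂
  · exact not_mul_lt_lt_succ_mul (Dvd.dvd.mul_left (pow_dvd_pow 2 hs) (j + 1)) h₂ h₃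

def dyadicChord (n s j : ℕ) : Sym2 (ZMod n) :=
  s(((j * 2 ^ s : ℕ) : ZMod n), (((j + 1) * 2 ^ s : ℕ) : ZMod n))

section DyadicChord
variable {n s j : ℕ}

lemma succ_mul_two_pow_sub (j s : ℕ) : (j + 1) * 2 ^ s - j * 2 ^ s = 2 ^ s := by
  rw [add_mul, one_mul, Nat.add_sub_cancel_left]

lemma eq_of_dyadicChord_eq {s' j' : ℕ} (h2 : 2 * 2 ^ s < n) (hj : (j + 1) * 2 ^ s ≤ n)
    (h2' : 2 * 2 ^ s' < n) (hj' : (j' + 1) * 2 ^ s' ≤ n)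
    (h : dyadicChord n s j = dyadicChord n s' j') : s = s' ∧ j = j' := by
  obtain ⟨hx, hy⟩ := eq_of_mk_natCast_eq (by nlinarith [Nat.one_le_two_pow (n := s)]) hj
    (by rwa [succ_mul_two_pow_sub]) (by nlinarith [Nat.one_le_two_pow (n := s')]) hj'
    (by rwa [succ_mul_two_pow_sub]) h
  have hs : 2 ^ s = 2 ^ s' := by
    rw [← succ_mul_two_pow_sub j s, ← succ_mul_two_pow_sub j' s', hx, hy]
  have hs := Nat.pow_right_injective le_rfl hs
  subst hs
  exact ⟨rfl, Nat.eq_of_mul_eq_mul_right (Nat.two_pow_pos s) hx⟩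

variable [NeZero n]

lemma chordLen_dyadicChord (h2 : 2 * 2 ^ s < n) :
    chordLen (dyadicChord n s j) = 2 ^ s := by
  rw [dyadicChord, chordLen_natCast (by nlinarith [Nat.one_le_two_pow (n := s)])
    (by rwa [succ_mul_two_pow_sub]), succ_mul_two_pow_sub]

lemma layersEdge_dyadicChord_iff (h2 : 2 * 2 ^ s < n) (hj : (j + 1) * 2 ^ s ≤ n) (i : ZMod n) :
    LayersEdge (dyadicChord n s j) i ↔ i.val / 2 ^ s = j := by
  rw [dyadicChord, layersEdge_natCast_iff (by nlinarith [Nat.one_le_two_pow (n := s)]) hj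
    (by rwa [succ_mul_two_pow_sub])]
  constructor
  · exact fun ⟨h₁, h₂⟩ => Nat.div_eq_of_lt_le h₁ h₂
  · rintro rfl
    refine ⟨Nat.div_mul_le_self _ _, ?_⟩
    rw [add_mul, one_mul]
    exact Nat.lt_div_mul_add (Nat.two_pow_pos s)

lemma not_crosses_dyadicChord {s' j' : ℕ} (h2 : 2 * 2 ^ s < n) (hj : (j + 1) * 2 ^ s ≤ n)
    (hj' : (j' + 1) * 2 ^ s' ≤ n) : ¬ Crosses (dyadicChord n s j) (dyadicChord n s' j') := by
  intro h
  rcases interleave_of_crosses_natCast (by nlinarith [Nat.one_le_two_pow (n := s)]) hj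
    (by rw [add_mul, one_mul]; omega) (by nlinarith [Nat.one_le_two_pow (n := s')]) hj' h
    with ⟨h₁, h₂, h₃⟩ | ⟨h₁, h₂, h₃⟩
  · exact not_dyadic_interleave h₁ h₂ h₃
  · exact not_dyadic_interleave h₁ h₂ h₃

end DyadicChord

def dyadicTriangulation (k : ℕ) : Finset (Sym2 (ZMod (3 * 2 ^ k))) :=
  (Finset.range k).biUnion fun t => (Finset.range (3 * 2 ^ t)).image (dyadicChord _ (k - t))

section DyadicTriangulation
variable {k : ℕ}

lemma dyadic_bounds {t j : ℕ} (ht : t < k) (hj : j < 3 * 2 ^ t) :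
    2 ≤ 2 ^ (k - t) ∧ 2 * 2 ^ (k - t) < 3 * 2 ^ k ∧ (j + 1) * 2 ^ (k - t) ≤ 3 * 2 ^ k := by
  have hk : 2 ^ k = 2 ^ t * 2 ^ (k - t) := by rw [← pow_add, Nat.add_sub_cancel' ht.le]
  have h₁ : 2 ≤ 2 ^ (k - t) := Nat.le_self_pow (by omega) 2
  have h₂ : 1 ≤ 2 ^ t := Nat.one_le_two_pow
  refine ⟨h₁, by rw [hk]; nlinarith, ?_⟩
  calc (j + 1) * 2 ^ (k - t) ≤ 3 * 2 ^ t * 2 ^ (k - t) := Nat.mul_le_mul_right _ hj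
    _ = 3 * 2 ^ k := by rw [hk, mul_assoc]

lemma mem_dyadicTriangulation {p : Sym2 (ZMod (3 * 2 ^ k))} :
    p ∈ dyadicTriangulation k ↔ ∃ t < k, ∃ j < 3 * 2 ^ t, dyadicChord _ (k - t) j = p := by
  simp [dyadicTriangulation]

lemma card_dyadicTriangulation : (dyadicTriangulation k).card = 3 * 2 ^ k - 3 := by
  rw [dyadicTriangulation, Finset.card_biUnion]
  · have hlevel : ∀ t ∈ Finset.range k,
        ((Finset.range (3 * 2 ^ t)).image (dyadicChord (3 * 2 ^ k) (k - t))).card = 3 * 2 ^ t := by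
      intro t ht
      rw [Finset.mem_range] at ht
      rw [Finset.card_image_of_injOn, Finset.card_range]
      intro j hj j' hj' h
      simp only [Finset.coe_range, Set.mem_Iio] at hj hj'
      exact (eq_of_dyadicChord_eq (dyadic_bounds ht hj).2.1 (dyadic_bounds ht hj).2.2
        (dyadic_bounds ht hj').2.1 (dyadic_bounds ht hj').2.2 h).2
    rw [Finset.sum_congr rfl hlevel, ← Finset.mul_sum, Nat.geomSum_eq le_rfl]
    simp [Nat.mul_sub]
  · intro t ht t' ht' htt'
    simp only [Finset.coe_range, Set.mem_Iio] at ht ht'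
    refine Finset.disjoint_left.mpr fun p hp hp' => htt' ?_
    simp only [Finset.mem_image, Finset.mem_range] at hp hp'
    obtain ⟨j, hj, rfl⟩ := hp
    obtain ⟨j', hj', h⟩ := hp'
    have := (eq_of_dyadicChord_eq (dyadic_bounds ht' hj').2.1 (dyadic_bounds ht' hj').2.2
        (dyadic_bounds ht hj).2.1 (dyadic_bounds ht hj).2.2 h).1
    omega

lemma two_le_chordLen_of_mem_dyadicTriangulation {p : Sym2 (ZMod (3 * 2 ^ k))}
    (hp : p ∈ dyadicTriangulation k) :
    2 ≤ chordLen p := by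
  obtain ⟨t, ht, j, hj, rfl⟩ := mem_dyadicTriangulation.mp hp
  rw [chordLen_dyadicChord (dyadic_bounds ht hj).2.1]
  exact (dyadic_bounds ht hj).1

lemma not_isDiameter_of_mem_dyadicTriangulation {p : Sym2 (ZMod (3 * 2 ^ k))}
    (hp : p ∈ dyadicTriangulation k) :
    ¬ IsDiameter p := by
  obtain ⟨t, ht, j, hj, rfl⟩ := mem_dyadicTriangulation.mp hp
  rw [IsDiameter, chordLen_dyadicChord (dyadic_bounds ht hj).2.1]
  exact (dyadic_bounds ht hj).2.1.ne

theorem isTriangulation_dyadicTriangulation :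
    IsTriangulation (3 * 2 ^ k) (dyadicTriangulation k) := by
  refine ⟨card_dyadicTriangulation, fun p hp => two_le_chordLen_of_mem_dyadicTriangulation hp,
    fun p hp q hq _ => ?_⟩
  obtain ⟨t, ht, j, hj, rfl⟩ := mem_dyadicTriangulation.mp hp
  obtain ⟨t', ht', j', hj', rfl⟩ := mem_dyadicTriangulation.mp hq
  exact not_crosses_dyadicChord (dyadic_bounds ht hj).2.1 (dyadic_bounds ht hj).2.2
    (dyadic_bounds ht' hj').2.2

theorem mT_dyadicTriangulation_le (i : ZMod (3 * 2 ^ k)) :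
    mT _ (dyadicTriangulation k) i ≤ 2 * k := by
  have hD : (dyadicTriangulation k).filter (fun p => IsDiameter p) = ∅ :=
    Finset.filter_eq_empty_iff.mpr fun _ hp => not_isDiameter_of_mem_dyadicTriangulation hp
  have hsub : (dyadicTriangulation k).filter (fun p => LayersEdge p i ∧ ¬ IsDiameter p) ⊆
      (Finset.range k).image fun t => dyadicChord _ (k - t) (i.val / 2 ^ (k - t)) := by
    intro p hp
    obtain ⟨hp, hL, -⟩ := Finset.mem_filter.mp hp
    obtain ⟨t, ht, j, hj, rfl⟩ := mem_dyadicTriangulation.mp hp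
    rw [layersEdge_dyadicChord_iff (dyadic_bounds ht hj).2.1 (dyadic_bounds ht hj).2.2] at hL
    exact Finset.mem_image.mpr ⟨t, Finset.mem_range.mpr ht, by rw [hL]⟩
  have := (Finset.card_le_card hsub).trans (Finset.card_image_le.trans (Finset.card_range k).le)
  rw [mT, hD, Finset.card_empty]
  omega

end DyadicTriangulation

theorem theta_eq_general (k : ℕ) :
    (∃ T : Finset (Sym2 (ZMod (3 * 2 ^ k))), IsTriangulation (3 * 2 ^ k) T ∧
      (∀ p ∈ T, ¬ IsDiameter p) ∧
      ∀ i : ZMod (3 * 2 ^ k), mT (3 * 2 ^ k) T i ≤ 2 * k) ∧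
    (∀ n : ℕ, ∀ T : Finset (Sym2 (ZMod n)), IsTriangulation n T →
      (∀ i : ZMod n, mT n T i ≤ 2 * k) → n ≤ 3 * 2 ^ k) :=
  ⟨⟨dyadicTriangulation k, isTriangulation_dyadicTriangulation,
      fun _ => not_isDiameter_of_mem_dyadicTriangulation, mT_dyadicTriangulation_le⟩,
    fun _ _ hT hm => le_three_mul_two_pow_of_mT_le hT hm⟩

/-- For every `k ≥ 1` there is a triangulation of the `3·2^k`-gon with no
diameter in which every boundary edge has layer number at most `k`; hence `3·2^k` is the
largest order of a triangulation all of whose boundary edges have layer number at most `k`. -/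
theorem theta_eq (k : ℕ) (hk : 1 ≤ k) :
    (∃ T : Finset (Sym2 (ZMod (3 * 2 ^ k))), IsTriangulation (3 * 2 ^ k) T ∧
      (∀ p ∈ T, ¬ IsDiameter p) ∧
      ∀ i : ZMod (3 * 2 ^ k), mT (3 * 2 ^ k) T i ≤ 2 * k) ∧
    (∀ n : ℕ, ∀ T : Finset (Sym2 (ZMod n)), IsTriangulation n T →
      (∀ i : ZMod n, mT n T i ≤ 2 * k) → n ≤ 3 * 2 ^ k) :=
  theta_eq_general k
end

section
/- Let k ≥ 0 and let n = 3·2^k. There exists a triangulation T of the n-gon in which every boundary edge e satisfies m_T(e) = 2k (layer number exactly k), and consequently TCL(T) = n·k = n(k+2) − 3·2^{k+1}; in particular, for k ≥ 1 such a T is obtained from a triangulation of the 3·2^{k−1}-gon with all layer numbers at most k−1 by subdividing every boundary edge and adding the corresponding chord over each new vertex. -/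
open scoped Classical

/-!
Cut the boundary of the `3·2^k`-gon, for each `s < k`, into the `3·2^s` consecutive arcs of
length `2^(k-s)`, and take the chords spanning these arcs. Two dyadic arcs are nested or
disjoint, so no two chords cross, and there are `3·(2^k - 1) = n - 3` of them. Every arc is
shorter than half the polygon, so there are no diameters, and every boundary edge lies in exactly
one arc of each of the `k` lengths: its layer number is `k`. Each length contributes `n` to the
total chord length. Removing the arcs of length `2` leaves the same construction for `k - 1`,
with all vertices doubled.
-/

open Finset

-- The cases `x ≤ w < x + n`, `w < x` and `x = 0, w = n`, stated so that `omega` can use them.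
theorem val_natCast_sub_natCast_cases {n x w : ℕ} (hn : 0 < n) (hx : x ≤ n) (hw : w ≤ n) :
    ((w : ZMod n) - x).val < n ∧
      (x + ((w : ZMod n) - x).val = w ∨ x + ((w : ZMod n) - x).val = w + n ∨
        x + ((w : ZMod n) - x).val + n = w) := by
  have hv : ((w : ZMod n) - x).val = (w + n - x) % n := by
    rw [← ZMod.val_natCast, Nat.cast_sub (by omega), Nat.cast_add, ZMod.natCast_self, add_zero]
  have hdiv := Nat.div_add_mod (w + n - x) n
  have hq : (w + n - x) / n < 3 := Nat.div_lt_of_lt_mul (by omega)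
  have hmod := Nat.mod_lt (w + n - x) hn
  rw [hv]
  interval_cases (w + n - x) / n <;> omega

theorem natCast_eq_natCast_iff_of_le {n a b : ℕ} (hn : 0 < n) (ha : a ≤ n) (hb : b ≤ n) :
    (a : ZMod n) = b ↔ a = b ∨ a + n = b ∨ a = b + n := by
  rw [← sub_eq_zero, ← ZMod.val_eq_zero]
  have := val_natCast_sub_natCast_cases hn hb ha
  omega

-- Vertices given by naturals in `[0, n]` turn arcs of the polygon into intervals of `ℕ`;
-- `0` and `n` name the same vertex.
def natChord (n x y : ℕ) : Sym2 (ZMod n) := s((x : ZMod n), (y : ZMod n))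

theorem chordLen_natChord {n x y : ℕ} (hxy : x < y) (hyn : y ≤ n) (h2 : 2 * (y - x) ≤ n) :
    chordLen (natChord n x y) = y - x := by
  have := val_natCast_sub_natCast_cases (w := y) (x := x) (by omega) (by omega) hyn
  have := val_natCast_sub_natCast_cases (w := x) (x := y) (by omega) hyn (by omega)
  simp only [chordLen, natChord, cycDist, Sym2.lift_mk]
  omega

theorem eq_of_natChord_eq {n x y x' y' : ℕ} (hxy : x < y) (hyn : y ≤ n) (hxy' : x' < y')
    (hyn' : y' ≤ n) (hlen : y - x + (y' - x') < n) (h : natChord n x y = natChord n x' y') :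
    x = x' ∧ y = y' := by
  have hn : 0 < n := by omega
  simp only [natChord, Sym2.eq_iff,
    natCast_eq_natCast_iff_of_le hn (a := x) (b := x') (by omega) (by omega),
    natCast_eq_natCast_iff_of_le hn (a := y) (b := y') hyn hyn',
    natCast_eq_natCast_iff_of_le hn (a := x) (b := y') (by omega) hyn',
    natCast_eq_natCast_iff_of_le hn (a := y) (b := x') hyn (by omega)] at h
  omega

theorem layersEdge_natChord_iff {n x y : ℕ} (hxy : x < y) (hyn : y ≤ n) (h2 : 2 * (y - x) < n)
    (i : ZMod n) : LayersEdge (natChord n x y) i ↔ x ≤ i.val ∧ i.val < y := by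
  have : NeZero n := ⟨by omega⟩
  have hin := i.val_lt
  have hi := val_natCast_sub_natCast_cases (w := i.val) (x := x) (by omega) (by omega) hin.le
  rw [ZMod.natCast_zmod_val] at hi
  have := val_natCast_sub_natCast_cases (w := y) (x := x) (by omega) (by omega) hyn
  have := val_natCast_sub_natCast_cases (w := x) (x := y) (by omega) hyn (by omega)
  constructor
  · rintro ⟨a, b, hab, hlt, hia⟩
    rcases Sym2.eq_iff.1 hab with ⟨rfl, rfl⟩ | ⟨rfl, rfl⟩ <;> omega
  · intro h
    exact ⟨x, y, rfl, by omega, by omega⟩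

theorem not_crosses_natChord {n x y x' y' : ℕ} (hxy : x < y) (hyn : y ≤ n) (hxy' : x' < y')
    (hyn' : y' ≤ n)
    (hlam : y ≤ x' ∨ y' ≤ x ∨ (x ≤ x' ∧ y' ≤ y) ∨ (x' ≤ x ∧ y ≤ y')) :
    ¬ Crosses (natChord n x y) (natChord n x' y') := by
  have hn : 0 < n := by omega
  have := val_natCast_sub_natCast_cases (w := y) (x := x) hn (by omega) hyn
  have := val_natCast_sub_natCast_cases (w := x) (x := y) hn hyn (by omega)
  have := val_natCast_sub_natCast_cases (w := x') (x := x) hn (by omega) (by omega)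
  have := val_natCast_sub_natCast_cases (w := y') (x := x) hn (by omega) hyn'
  have := val_natCast_sub_natCast_cases (w := x') (x := y) hn hyn (by omega)
  have := val_natCast_sub_natCast_cases (w := y') (x := y) hn hyn hyn'
  have e1 := natCast_eq_natCast_iff_of_le hn (a := x) (b := x') (by omega) (by omega)
  have e2 := natCast_eq_natCast_iff_of_le hn (a := x) (b := y') (by omega) hyn'
  have e3 := natCast_eq_natCast_iff_of_le hn (a := y) (b := x') hyn (by omega)
  have e4 := natCast_eq_natCast_iff_of_le hn (a := y) (b := y') hyn hyn'
  rintro ⟨a, b, c, d, hp, hq, -, hac, had, hbc, hbd, -, hx⟩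
  rcases Sym2.eq_iff.1 hp with ⟨rfl, rfl⟩ | ⟨rfl, rfl⟩ <;>
    rcases Sym2.eq_iff.1 hq with ⟨rfl, rfl⟩ | ⟨rfl, rfl⟩ <;>
    obtain ⟨hc, hd⟩ | ⟨hc, hd⟩ := hx <;>
    simp only [ne_eq, e1, e2, e3, e4, InArc] at hac had hbc hbd hc hd <;>
    omega

theorem intervals_laminar_of_dvd {d e : ℕ} (hde : d ∣ e) (a b : ℕ) :
    d * a + d ≤ e * b ∨ e * b + e ≤ d * a ∨
      (e * b ≤ d * a ∧ d * a + d ≤ e * b + e) := by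
  obtain ⟨m, rfl⟩ := hde
  rcases lt_or_ge a (m * b) with h | h
  · left; nlinarith
  · rcases lt_or_ge a (m * b + m) with h' | h'
    · right; right; constructor <;> nlinarith
    · right; left; nlinarith

def arcChords (n d : ℕ) : Finset (Sym2 (ZMod n)) :=
  (range (n / d)).image fun a => natChord n (d * a) (d * a + d)

section arcChords

variable {n d : ℕ}

theorem pos_and_mul_add_le_of_lt_div {a : ℕ} (ha : a < n / d) : 0 < d ∧ d * a + d ≤ n := by
  have hd : 0 < d := Nat.pos_of_ne_zero (by rintro rfl; simp at ha)
  refine ⟨hd, ?_⟩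
  have := (Nat.le_div_iff_mul_le hd).1 ha
  linarith [add_one_mul a d, mul_comm a d]

theorem chordLen_of_mem_arcChords (h2 : 2 * d < n) {p : Sym2 (ZMod n)}
    (hp : p ∈ arcChords n d) : chordLen p = d := by
  obtain ⟨a, ha, rfl⟩ := mem_image.1 hp
  obtain ⟨hd, hle⟩ := pos_and_mul_add_le_of_lt_div (mem_range.1 ha)
  rw [chordLen_natChord (by omega) hle (by omega)]
  omega

theorem card_arcChords (h2 : 2 * d < n) : (arcChords n d).card = n / d := by
  refine (card_image_of_injOn fun a ha b hb hab => ?_).trans (card_range _)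
  obtain ⟨hd, hla⟩ := pos_and_mul_add_le_of_lt_div (mem_range.1 ha)
  obtain ⟨-, hlb⟩ := pos_and_mul_add_le_of_lt_div (mem_range.1 hb)
  exact Nat.eq_of_mul_eq_mul_left hd
    (eq_of_natChord_eq (by omega) hla (by omega) hlb (by omega) hab).1

theorem sum_chordLen_arcChords (hd : d ∣ n) (h2 : 2 * d < n) :
    ∑ p ∈ arcChords n d, chordLen p = n := by
  rw [sum_congr rfl fun p hp => chordLen_of_mem_arcChords h2 hp, sum_const, card_arcChords h2,
    smul_eq_mul, Nat.div_mul_cancel hd]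

theorem card_filter_layersEdge_arcChords (hd : d ∣ n) (h2 : 2 * d < n) (i : ZMod n) :
    ((arcChords n d).filter (LayersEdge · i)).card = 1 := by
  have hd0 : 0 < d := Nat.pos_of_ne_zero (by rintro rfl; omega)
  have : NeZero n := ⟨by omega⟩
  suffices (range (n / d)).filter (fun a => LayersEdge (natChord n (d * a) (d * a + d)) i) =
      {i.val / d} by
    rw [arcChords, filter_image, this, image_singleton, card_singleton]
  ext a
  simp only [mem_filter, mem_range, mem_singleton]
  constructor
  · rintro ⟨ha, hl⟩
    obtain ⟨-, hle⟩ := pos_and_mul_add_le_of_lt_div ha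
    obtain ⟨hlo, hhi⟩ := (layersEdge_natChord_iff (by omega) hle (by omega) i).1 hl
    refine (Nat.div_eq_of_lt_le ?_ ?_).symm
    · rwa [mul_comm]
    · rwa [add_one_mul, mul_comm]
  · rintro rfl
    have ha := Nat.div_lt_div_of_lt_of_dvd hd i.val_lt
    obtain ⟨-, hle⟩ := pos_and_mul_add_le_of_lt_div ha
    refine ⟨ha, (layersEdge_natChord_iff (by omega) hle (by omega) i).2 ⟨?_, ?_⟩⟩
    · rw [mul_comm]
      exact Nat.div_mul_le_self _ _
    · rw [mul_comm]
      exact Nat.lt_div_mul_add hd0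

theorem not_crosses_of_mem_arcChords {e : ℕ} (hde : d ∣ e ∨ e ∣ d) {p q : Sym2 (ZMod n)}
    (hp : p ∈ arcChords n d) (hq : q ∈ arcChords n e) : ¬ Crosses p q := by
  obtain ⟨a, ha, rfl⟩ := mem_image.1 hp
  obtain ⟨b, hb, rfl⟩ := mem_image.1 hq
  obtain ⟨hd, hla⟩ := pos_and_mul_add_le_of_lt_div (mem_range.1 ha)
  obtain ⟨he, hlb⟩ := pos_and_mul_add_le_of_lt_div (mem_range.1 hb)
  refine not_crosses_natChord (by omega) hla (by omega) hlb ?_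
  rcases hde with hde | hde
  · have := intervals_laminar_of_dvd hde a b
    omega
  · have := intervals_laminar_of_dvd hde b a
    omega

end arcChords

theorem map_natChord_double (m x y : ℕ) :
    Sym2.map (fun a : ZMod m => ((2 * a.val : ℕ) : ZMod (2 * m))) (natChord m x y) =
      natChord (2 * m) (2 * x) (2 * y) := by
  simp only [natChord, Sym2.map_mk, ZMod.val_natCast, ← Nat.mul_mod_mul_left,
    ZMod.natCast_mod]

theorem image_double_arcChords (m d : ℕ) :
    (arcChords m d).image (Sym2.map fun a : ZMod m => ((2 * a.val : ℕ) : ZMod (2 * m))) =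
      arcChords (2 * m) (2 * d) := by
  rw [arcChords, arcChords, image_image, Nat.mul_div_mul_left _ _ two_pos]
  congr 1
  funext a
  rw [Function.comp_apply, map_natChord_double, mul_add, mul_assoc]

theorem doubleTri_biUnion_arcChords (m : ℕ) (S : Finset ℕ) (f : ℕ → ℕ) :
    doubleTri m (S.biUnion fun s => arcChords m (f s)) =
      (S.biUnion fun s => arcChords (2 * m) (2 * f s)) ∪ arcChords (2 * m) 2 := by
  simp only [doubleTri, biUnion_image, image_double_arcChords]
  rw [arcChords, Nat.mul_div_cancel_left m two_pos]
  rfl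

theorem image_cast_arcChords {N N' : ℕ} (h : N = N') (d : ℕ) :
    (arcChords N d).image (Sym2.map fun x : ZMod N => ((x.val : ℕ) : ZMod N')) =
      arcChords N' d := by
  subst h
  rw [arcChords, image_image]
  congr 1
  funext a
  simp only [Function.comp_apply, natChord, Sym2.map_mk, ZMod.val_natCast, ZMod.natCast_mod]

def dyadicTri (k : ℕ) : Finset (Sym2 (ZMod (3 * 2 ^ k))) :=
  (range k).biUnion fun s => arcChords (3 * 2 ^ k) (2 ^ (k - s))

section dyadicTri

variable (k : ℕ)

theorem two_pow_sub_dvd_three_mul_two_pow (s : ℕ) : 2 ^ (k - s) ∣ 3 * 2 ^ k :=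
  Dvd.dvd.mul_left (pow_dvd_pow 2 (Nat.sub_le k s)) 3

theorem two_mul_two_pow_sub_lt_three_mul_two_pow (s : ℕ) : 2 * 2 ^ (k - s) < 3 * 2 ^ k := by
  have := Nat.pow_le_pow_right two_pos (Nat.sub_le k s)
  have := Nat.two_pow_pos k
  omega

theorem three_mul_two_pow_div_two_pow_sub {s : ℕ} (hs : s ≤ k) :
    3 * 2 ^ k / 2 ^ (k - s) = 3 * 2 ^ s :=
  Nat.div_eq_of_eq_mul_left (Nat.two_pow_pos _) <| by
    rw [mul_assoc, ← pow_add, Nat.add_sub_cancel' hs]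

theorem chordLen_of_mem_dyadicTri {p : Sym2 (ZMod (3 * 2 ^ k))} (hp : p ∈ dyadicTri k) :
    ∃ s < k, chordLen p = 2 ^ (k - s) := by
  obtain ⟨s, hs, hp⟩ := mem_biUnion.1 hp
  exact ⟨s, mem_range.1 hs,
    chordLen_of_mem_arcChords (two_mul_two_pow_sub_lt_three_mul_two_pow k s) hp⟩

theorem pairwiseDisjoint_dyadicTri_levels :
    (range k : Set ℕ).PairwiseDisjoint fun s => arcChords (3 * 2 ^ k) (2 ^ (k - s)) := by
  have h2 := two_mul_two_pow_sub_lt_three_mul_two_pow k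
  intro s hs t ht hst
  refine Finset.disjoint_left.2 fun p hps hpt => hst ?_
  have := (chordLen_of_mem_arcChords (h2 s) hps).symm.trans (chordLen_of_mem_arcChords (h2 t) hpt)
  have := Nat.pow_right_injective le_rfl this
  simp only [coe_range, Set.mem_Iio] at hs ht
  omega

theorem card_dyadicTri : (dyadicTri k).card = 3 * 2 ^ k - 3 := by
  have hcard : ∀ s ∈ range k, (arcChords (3 * 2 ^ k) (2 ^ (k - s))).card = 3 * 2 ^ s :=
    fun s hs => by
      rw [card_arcChords (two_mul_two_pow_sub_lt_three_mul_two_pow k s),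
        three_mul_two_pow_div_two_pow_sub k (mem_range.1 hs).le]
  rw [dyadicTri, card_biUnion (pairwiseDisjoint_dyadicTri_levels k), sum_congr rfl hcard,
    ← mul_sum, Nat.geomSum_eq le_rfl]
  norm_num [Nat.mul_sub_one]

theorem isTriangulation_dyadicTri : IsTriangulation (3 * 2 ^ k) (dyadicTri k) := by
  refine ⟨card_dyadicTri k, fun p hp => ?_, fun p hp q hq _ => ?_⟩
  · obtain ⟨s, hs, h⟩ := chordLen_of_mem_dyadicTri k hp
    rw [h]
    exact Nat.le_self_pow (by omega) 2
  · obtain ⟨s, -, hps⟩ := mem_biUnion.1 hp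
    obtain ⟨t, -, hqt⟩ := mem_biUnion.1 hq
    exact not_crosses_of_mem_arcChords
      ((le_total _ _).imp (pow_dvd_pow 2) (pow_dvd_pow 2)) hps hqt

theorem tcl_dyadicTri : TCL (3 * 2 ^ k) (dyadicTri k) = 3 * 2 ^ k * k := by
  have hdvd := two_pow_sub_dvd_three_mul_two_pow k
  have h2 := two_mul_two_pow_sub_lt_three_mul_two_pow k
  rw [TCL, dyadicTri, sum_biUnion (pairwiseDisjoint_dyadicTri_levels k),
    sum_congr rfl fun s _ => sum_chordLen_arcChords (hdvd s) (h2 s), sum_const, card_range,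
    smul_eq_mul, mul_comm]

theorem mT_dyadicTri (i : ZMod (3 * 2 ^ k)) : mT (3 * 2 ^ k) (dyadicTri k) i = 2 * k := by
  have hdvd := two_pow_sub_dvd_three_mul_two_pow k
  have h2 := two_mul_two_pow_sub_lt_three_mul_two_pow k
  have hdiam : ∀ p ∈ dyadicTri k, ¬ IsDiameter p := fun p hp => by
    obtain ⟨s, -, h⟩ := chordLen_of_mem_dyadicTri k hp
    rw [IsDiameter, h]
    exact (h2 s).ne
  rw [mT, filter_false_of_mem hdiam, card_empty, add_zero,
    filter_congr fun p hp => and_iff_left (hdiam p hp), dyadicTri, filter_biUnion,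
    card_biUnion ((pairwiseDisjoint_dyadicTri_levels k).mono fun s => filter_subset _ _),
    sum_congr rfl fun s _ => card_filter_layersEdge_arcChords (hdvd s) (h2 s) i, sum_const,
    card_range, smul_eq_mul, mul_one]

theorem dyadicTri_succ :
    dyadicTri (k + 1) = (doubleTri (3 * 2 ^ k) (dyadicTri k)).image
      (Sym2.map fun x => ((x.val : ℕ) : ZMod (3 * 2 ^ (k + 1)))) := by
  have hN : 2 * (3 * 2 ^ k) = 3 * 2 ^ (k + 1) := by ring
  rw [dyadicTri, dyadicTri, doubleTri_biUnion_arcChords, image_union, biUnion_image,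
    image_cast_arcChords hN, range_add_one, biUnion_insert, union_comm, Nat.add_sub_cancel_left,
    pow_one]
  simp only [image_cast_arcChords hN]
  congr 1
  refine biUnion_congr rfl fun s hs => ?_
  rw [show 2 ^ (k + 1 - s) = 2 * 2 ^ (k - s) by
    rw [← pow_succ', Nat.sub_add_comm (mem_range.1 hs).le]]

end dyadicTri

/-- For `k ≥ 0` and `n = 3·2^k`, there is a triangulation `T` of the `n`-gon
in which every boundary edge has doubled layer number exactly `2k`, so
`TCL(T) = n·k = n(k+2) - 3·2^(k+1)`; moreover, for `k = j + 1 ≥ 1` such a `T` is obtained from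
a triangulation of the `3·2^j`-gon with all layer numbers at most `j` by subdividing every
boundary edge and adding the chord over each new vertex (the doubling construction). -/
theorem balanced_triangulation_exists (k : ℕ) :
    ∃ T : Finset (Sym2 (ZMod (3 * 2 ^ k))), IsTriangulation (3 * 2 ^ k) T ∧
      (∀ i : ZMod (3 * 2 ^ k), mT (3 * 2 ^ k) T i = 2 * k) ∧
      TCL (3 * 2 ^ k) T = 3 * 2 ^ k * k ∧
      3 * 2 ^ k * k = 3 * 2 ^ k * (k + 2) - 3 * 2 ^ (k + 1) ∧
      (∀ j : ℕ, k = j + 1 →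
        ∃ T₀ : Finset (Sym2 (ZMod (3 * 2 ^ j))), IsTriangulation (3 * 2 ^ j) T₀ ∧
          (∀ i : ZMod (3 * 2 ^ j), mT (3 * 2 ^ j) T₀ i ≤ 2 * j) ∧
          T = (doubleTri (3 * 2 ^ j) T₀).image
                (Sym2.map (fun x => ((x.val : ℕ) : ZMod (3 * 2 ^ k))))) := by
  refine ⟨dyadicTri k, isTriangulation_dyadicTri k, mT_dyadicTri k, tcl_dyadicTri k, ?_, ?_⟩
  · have : 3 * 2 ^ k * (k + 2) = 3 * 2 ^ k * k + 3 * 2 ^ (k + 1) := by ring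
    omega
  · rintro j rfl
    exact ⟨dyadicTri j, isTriangulation_dyadicTri j, fun i => (mT_dyadicTri j i).le,
      dyadicTri_succ j⟩
end
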